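/- arXiv:2601.08366 — 11 statements merged into one kernel-verified Lean document; each statement's English description precedes it below -/
import Mathlib

section
/- For all integers n ≥ 1 and k ≥ 0, the number u(n,k) of symmetric Dyck paths of semi-length n with exactly k valleys equals binomial(⌊(n-1)/2⌋, ⌊k/2⌋) · binomial(⌊n/2⌋, ⌊(k+1)/2⌋). -/
/-- A Dyck path of semi-length `n`, encoded as a list of booleans where
`true` is an up-step `U` and `false` is a down-step `D`: it has `2*n` steps,
`n` of them up-steps, and every prefix has at least as many `U`'s as `D`'s. -/
def IsDyckPath (n : ℕ) (p : List Bool) : Prop :=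
  p.length = 2 * n ∧ p.count true = n ∧
    ∀ i, (p.take i).count false ≤ (p.take i).count true

/-- The number of valleys of a path: positions where a `D` step is
immediately followed by a `U` step. -/
def valleys (p : List Bool) : ℕ :=
  (p.zip p.tail).count (false, true)

/-- A path is symmetric if reversing the sequence of steps and exchanging
`U` and `D` leaves it unchanged. -/
def IsSymmetric (p : List Bool) : Prop :=
  (p.reverse.map (fun b => !b)) = p

/-- `u n k` is the number of symmetric Dyck paths of semi-length `n`
with exactly `k` valleys. -/
noncomputable def u (n k : ℕ) : ℕ :=
  Set.ncard {p : List Bool | IsDyckPath n p ∧ IsSymmetric p ∧ valleys p = k}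

namespace SDP

open List

/-- nonnegativity condition -/
def Good (q : List Bool) : Prop :=
  ∀ i, (q.take i).count false ≤ (q.take i).count true

/-- reverse-complement -/
def rc (q : List Bool) : List Bool := q.reverse.map (fun b => !b)

/- ### valleys lemmas -/

lemma valleys_nil : valleys [] = 0 := rfl

lemma valleys_single (a : Bool) : valleys [a] = 0 := rfl

lemma valleys_cons_cons (a b : Bool) (l : List Bool) :
    valleys (a :: b :: l) = valleys (b :: l) + (if a = false ∧ b = true then 1 else 0) := by
  simp only [valleys, zip, zipWith_cons_cons, tail_cons, count_cons]
  congr 1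
  rcases a <;> rcases b <;> simp

lemma valleys_append (q q' : List Bool) (h : q' ≠ []) :
    valleys (q ++ q') = valleys q + valleys q' +
      (if q.getLast? = some false ∧ q'.head? = some true then 1 else 0) := by
  induction q with
  | nil => simp [valleys_nil]
  | cons a q ih =>
    cases q with
    | nil =>
      cases q' with
      | nil => exact absurd rfl h
      | cons c t =>
        simp only [singleton_append, valleys_cons_cons, valleys_single, getLast?_singleton,
          head?_cons, Option.some.injEq]
        omega
    | cons c t =>
      simp only [cons_append] at ih ⊢
      rw [valleys_cons_cons a c (t ++ q'), valleys_cons_cons a c t, ih, getLast?_cons_cons]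
      ring

lemma valleys_concat (q : List Bool) (b : Bool) :
    valleys (q ++ [b]) = valleys q +
      (if q.getLast? = some false ∧ b = true then 1 else 0) := by
  rw [valleys_append q [b] (by simp), valleys_single]
  simp only [head?_cons, Option.some.injEq, add_zero, valleys_single]

lemma valleys_cons (a : Bool) (q : List Bool) :
    valleys (a :: q) = valleys q + (if a = false ∧ q.head? = some true then 1 else 0) := by
  cases q with
  | nil => simp [valleys_nil, valleys_single]
  | cons c t => rw [valleys_cons_cons]; simp only [head?_cons, Option.some.injEq]

/- ### counts -/

lemma count_map_not (l : List Bool) (b : Bool) :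
    (l.map (fun x => !x)).count b = l.count (!b) := by
  induction l with
  | nil => simp
  | cons a l ih =>
    simp only [map_cons, count_cons, ih]
    rcases a <;> rcases b <;> simp

lemma count_true_add_count_false (l : List Bool) : l.count true + l.count false = l.length := by
  induction l with
  | nil => simp
  | cons a l ih => rcases a <;> simp [count_cons] <;> omega

lemma count_rc (q : List Bool) (b : Bool) : (rc q).count b = q.count (!b) := by
  simp [rc, count_map_not]

lemma length_rc (q : List Bool) : (rc q).length = q.length := by simp [rc]

lemma head?_rc (q : List Bool) : (rc q).head? = (q.getLast?).map (fun x => !x) := by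
  simp [rc]

lemma rc_cons (a : Bool) (q : List Bool) : rc (a :: q) = rc q ++ [!a] := by
  simp [rc]

lemma getLast?_rc (q : List Bool) : (rc q).getLast? = (q.head?).map (fun x => !x) := by
  simp [rc]

lemma valleys_rc (q : List Bool) : valleys (rc q) = valleys q := by
  induction q with
  | nil => simp [rc, valleys_nil]
  | cons a q ih =>
    rw [rc_cons, valleys_concat, ih, valleys_cons, getLast?_rc]
    congr 1
    rcases a <;> cases hq : q.head? with
    | none => simp [hq]
    | some c => rcases c <;> simp [hq]

/- ### Good lemmas -/

lemma good_take (q : List Bool) (i : ℕ) (h : Good q) : Good (q.take i) := by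
  intro j
  rw [take_take]
  exact h _

lemma good_count {q : List Bool} (h : Good q) : q.count false ≤ q.count true := by
  have := h q.length
  simpa using this

lemma good_concat (r : List Bool) (b : Bool) :
    Good (r ++ [b]) ↔ Good r ∧ (r ++ [b]).count false ≤ (r ++ [b]).count true := by
  constructor
  · intro h
    refine ⟨fun i => ?_, ?_⟩
    · rcases le_or_gt i r.length with hi | hi
      · have := h i
        rwa [take_append_of_le_length hi] at this
      · rw [take_of_length_le (by omega)]
        have := h r.length
        rwa [take_append_of_le_length le_rfl, take_of_length_le le_rfl] at this
    · have := h (r.length + 1)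
      rwa [take_of_length_le (by simp)] at this
  · rintro ⟨hg, hc⟩ i
    rcases le_or_gt i r.length with hi | hi
    · rw [take_append_of_le_length hi]
      exact hg i
    · rwa [take_of_length_le (by simp; omega)]

lemma good_concat_true (r : List Bool) : Good (r ++ [true]) ↔ Good r := by
  rw [good_concat]
  constructor
  · exact fun h => h.1
  · intro h
    refine ⟨h, ?_⟩
    have := good_count h
    simp [count_append]
    omega

lemma good_concat_false (r : List Bool) :
    Good (r ++ [false]) ↔ Good r ∧ r.count false + 1 ≤ r.count true := by
  rw [good_concat]
  simp [count_append]

lemma good_nil : Good [] := by intro i; simp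

lemma ends_true_strict {q : List Bool} (h : Good q) (hl : q.getLast? = some true) :
    q.count false < q.count true := by
  obtain ⟨r, rfl⟩ := getLast?_eq_some_iff.1 hl
  have hr : Good r := (good_concat_true r).1 h
  have := good_count hr
  simp [count_append]
  omega

lemma one_le_valleys {q : List Bool} (hl : q.getLast? = some true) (hf : false ∈ q) :
    1 ≤ valleys q := by
  induction q with
  | nil => simp at hf
  | cons a t ih =>
    cases t with
    | nil =>
      simp at hl hf
      simp [hf] at hl
    | cons c t' =>
      rw [valleys_cons_cons]
      rw [getLast?_cons_cons] at hl
      by_cases hc : c = false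
      · subst hc
        have := ih hl (by simp)
        omega
      · have hc' : c = true := by rcases c <;> simp_all
        subst hc'
        by_cases ha : a = false
        · subst ha; simp
        · have ha' : a = true := by rcases a <;> simp_all
          subst ha'
          have hf' : false ∈ true :: t' := by simpa using hf
          have := ih hl hf'
          omega

/- ### finiteness -/

lemma finite_len (n : ℕ) : {l : List Bool | l.length = n}.Finite := by
  induction n with
  | zero =>
    refine Set.Finite.subset (Set.finite_singleton []) ?_
    intro l hl
    simp at hl ⊢
    exact hl
  | succ n ih =>
    have : {l : List Bool | l.length = n + 1} ⊆
        (fun p : Bool × List Bool => p.1 :: p.2) '' (Set.univ ×ˢ {l | l.length = n}) := by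
      rintro l hl
      cases l with
      | nil => simp at hl
      | cons a t =>
        refine ⟨(a, t), ⟨trivial, ?_⟩, rfl⟩
        simp at hl ⊢
        omega
    exact Set.Finite.subset (Set.Finite.image _ ((Set.finite_univ).prod ih)) this

lemma finite_of_len {S : Set (List Bool)} {n : ℕ} (h : ∀ q ∈ S, q.length = n) : S.Finite :=
  Set.Finite.subset (finite_len n) h

/- ### counting sets -/

def GS (v a d : ℕ) : Set (List Bool) :=
  {q | q.count true = a ∧ q.count false = d ∧ Good q ∧ valleys q = v ∧ q.getLast? = some true}

def FS (v a d : ℕ) : Set (List Bool) :=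
  {q | q.count true = a ∧ q.count false = d ∧ Good q ∧ valleys q = v ∧ q.getLast? = some false}

def AS (n v : ℕ) : Set (List Bool) :=
  {q | q.length = n ∧ Good q ∧ valleys q = v ∧ q.getLast? = some true}

def BS (n v : ℕ) : Set (List Bool) :=
  {q | q.length = n ∧ Good q ∧ valleys q = v ∧ q.getLast? = some false}

lemma finite_GS (v a d : ℕ) : (GS v a d).Finite := by
  refine finite_of_len (n := a + d) ?_
  rintro q ⟨h1, h2, -⟩
  rw [← count_true_add_count_false q, h1, h2]

lemma finite_FS (v a d : ℕ) : (FS v a d).Finite := by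
  refine finite_of_len (n := a + d) ?_
  rintro q ⟨h1, h2, -⟩
  rw [← count_true_add_count_false q, h1, h2]

lemma finite_AS (n v : ℕ) : (AS n v).Finite := finite_of_len (fun q hq => hq.1)

lemma finite_BS (n v : ℕ) : (BS n v).Finite := finite_of_len (fun q hq => hq.1)

lemma ncard_last (P : List Bool → Prop) (b : Bool) :
    {q | P q ∧ q.getLast? = some b}.ncard = {r | P (r ++ [b])}.ncard := by
  have himg : {q | P q ∧ q.getLast? = some b} = (fun r => r ++ [b]) '' {r | P (r ++ [b])} := by
    ext q
    constructor
    · rintro ⟨hP, hl⟩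
      obtain ⟨r, rfl⟩ := getLast?_eq_some_iff.1 hl
      exact ⟨r, hP, rfl⟩
    · rintro ⟨r, hr, rfl⟩
      exact ⟨hr, getLast?_concat⟩
  rw [himg]
  exact Set.ncard_image_of_injective _ (fun x y h => by simpa using h)

lemma ncard_split {S S1 S2 : Set (List Bool)} (h : S = S1 ∪ S2) (hd : Disjoint S1 S2)
    (h1 : S1.Finite) (h2 : S2.Finite) : S.ncard = S1.ncard + S2.ncard := by
  subst h
  exact Set.ncard_union_eq hd h1 h2

/- ### the counting functions -/

def ch (n k : ℕ) : ℤ := (n.choose k : ℤ)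

lemma ch_pascal (t v : ℕ) : ch (t + 1) (v + 1) = ch t v + ch t (v + 1) := by
  simp only [ch, Nat.choose_succ_succ]
  push_cast
  ring

lemma ch_zero (n : ℕ) : ch n 0 = 1 := by simp [ch]

lemma ch_big {n k : ℕ} (h : n < k) : ch n k = 0 := by
  simp [ch, Nat.choose_eq_zero_of_lt h]

def gf : ℕ → ℕ → ℕ → ℤ
  | v, a, d =>
    if d = 0 then (if v = 0 ∧ 1 ≤ a then 1 else 0)
    else if a ≤ d then 0
    else match v with
      | 0 => 0
      | v + 1 => ch (a - 1) (v + 1) * ch (d - 1) v - ch (a - 1) v * ch (d - 1) (v + 1)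

def ff : ℕ → ℕ → ℕ → ℤ
  | v, a, d =>
    if d = 0 ∨ a < d then 0
    else match v with
      | 0 => 1
      | v + 1 => ch (a - 1) (v + 1) * ch (d - 1) (v + 1) - ch (a - 1) v * ch (d - 1) (v + 2)

lemma gf_d0 (v a : ℕ) : gf v a 0 = if v = 0 ∧ 1 ≤ a then 1 else 0 := by
  simp [gf]

lemma gf_le {a d : ℕ} (v : ℕ) (hd : d ≠ 0) (h : a ≤ d) : gf v a d = 0 := by
  rcases v <;> simp [gf, hd, h]

lemma gf_zero {a d : ℕ} (hd : d ≠ 0) : gf 0 a d = 0 := by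
  simp [gf, hd]

lemma gf_succ {a d : ℕ} (v : ℕ) (hd : d ≠ 0) (h : d < a) :
    gf (v + 1) a d = ch (a - 1) (v + 1) * ch (d - 1) v - ch (a - 1) v * ch (d - 1) (v + 1) := by
  simp [gf, hd, Nat.not_le.2 h]

lemma ff_d0 (v a : ℕ) : ff v a 0 = 0 := by simp [ff]

lemma ff_lt {a d : ℕ} (v : ℕ) (h : a < d) : ff v a d = 0 := by
  rcases v <;> simp [ff, h]

lemma ff_zero {a d : ℕ} (hd : d ≠ 0) (h : d ≤ a) : ff 0 a d = 1 := by
  simp [ff, hd, Nat.not_lt.2 h]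

lemma ff_succ {a d : ℕ} (v : ℕ) (hd : d ≠ 0) (h : d ≤ a) :
    ff (v + 1) a d = ch (a - 1) (v + 1) * ch (d - 1) (v + 1) - ch (a - 1) v * ch (d - 1) (v + 2) := by
  simp [ff, hd, Nat.not_lt.2 h]

lemma E1 (a d : ℕ) : gf 0 (a + 1) d = (if a = 0 ∧ d = 0 then 1 else 0) + gf 0 a d := by
  rcases Nat.eq_zero_or_pos d with rfl | hd
  · rw [gf_d0, gf_d0]
    split_ifs <;> omega
  · rw [gf_zero (by omega), gf_zero (by omega), if_neg (by omega)]
    ring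

lemma E2 (v a d : ℕ) : gf (v + 1) (a + 1) d = gf (v + 1) a d + ff v a d := by
  rcases Nat.eq_zero_or_pos d with rfl | hd
  · rw [gf_d0, gf_d0, ff_d0, if_neg (by omega), if_neg (by omega)]
    ring
  rcases le_or_gt (a + 1) d with had | had
  · rw [gf_le _ (by omega) had, gf_le _ (by omega) (by omega), ff_lt _ (by omega)]
    ring
  obtain ⟨e, rfl⟩ : ∃ e, d = e + 1 := ⟨d - 1, by omega⟩
  rcases eq_or_lt_of_le (Nat.lt_succ_iff.1 had) with heq | hlt
  -- heq : e + 1 = a ... careful direction: had : e+1 < a+1 so e+1 ≤ a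
  · -- a = e + 1
    subst heq
    rw [gf_succ _ (by omega) (by omega), gf_le _ (by omega) le_rfl]
    rcases v with _ | w
    · rw [ff_zero (by omega) le_rfl]
      simp only [Nat.add_sub_cancel]
      rw [ch_pascal e 0]
      simp only [ch_zero]
      ring
    · rw [ff_succ _ (by omega) le_rfl]
      simp only [Nat.add_sub_cancel]
      rw [ch_pascal e (w + 1), ch_pascal e w]
      ring
  · -- e + 1 < a, so a = t + 1 with t > e
    obtain ⟨t, rfl⟩ : ∃ t, a = t + 1 := ⟨a - 1, by omega⟩
    rcases v with _ | w
    · rw [gf_succ _ (by omega) (by omega), gf_succ _ (by omega) (by omega),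
        ff_zero (by omega) (by omega)]
      simp only [Nat.add_sub_cancel]
      rw [ch_pascal t 0]
      simp only [ch_zero]
      ring
    · rw [gf_succ _ (by omega) (by omega), gf_succ _ (by omega) (by omega),
        ff_succ _ (by omega) (by omega)]
      simp only [Nat.add_sub_cancel]
      rw [ch_pascal t (w + 1), ch_pascal t w]
      ring

lemma E3 {v a d : ℕ} (h : d + 1 ≤ a) : ff v a (d + 1) = gf v a d + ff v a d := by
  rcases Nat.eq_zero_or_pos d with rfl | hd
  · rcases v with _ | w
    · rw [ff_d0, gf_d0, ff_zero (by omega) (by omega), if_pos ⟨rfl, by omega⟩]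
      ring
    · rw [ff_d0, gf_d0, ff_succ _ (by omega) (by omega), if_neg (by omega)]
      simp only [Nat.add_sub_cancel]
      rw [ch_big (show (0:ℕ) < w + 1 by omega), ch_big (show (0:ℕ) < w + 2 by omega)]
      ring
  · obtain ⟨e, rfl⟩ : ∃ e, d = e + 1 := ⟨d - 1, by omega⟩
    rcases v with _ | w
    · rw [ff_zero (by omega) (by omega), ff_zero (by omega) (by omega), gf_zero (by omega)]
      ring
    · rw [ff_succ _ (by omega) (by omega), ff_succ _ (by omega) (by omega),
        gf_succ _ (by omega) (by omega)]
      simp only [Nat.add_sub_cancel]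
      rw [ch_pascal e (w + 1), ch_pascal e w]
      ring

/- ### set-level recurrences for GS/FS -/

lemma GS_empty_a0 (v d : ℕ) : GS v 0 d = ∅ := by
  ext q
  simp only [GS, Set.mem_setOf_eq, Set.mem_empty_iff_false, iff_false, not_and]
  intro h1 _ _ _ h5
  obtain ⟨r, rfl⟩ := getLast?_eq_some_iff.1 h5
  simp [count_append] at h1

lemma FS_empty_d0 (v a : ℕ) : FS v a 0 = ∅ := by
  ext q
  simp only [FS, Set.mem_setOf_eq, Set.mem_empty_iff_false, iff_false, not_and]
  intro _ h2 _ _ h5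
  obtain ⟨r, rfl⟩ := getLast?_eq_some_iff.1 h5
  simp [count_append] at h2

lemma FS_empty_lt {v a d : ℕ} (h : a < d) : FS v a d = ∅ := by
  ext q
  simp only [FS, Set.mem_setOf_eq, Set.mem_empty_iff_false, iff_false, not_and]
  rintro h1 h2 h3 - -
  have := good_count h3
  omega

lemma disj_GS_FS (v v' a a' d d' : ℕ) : Disjoint (GS v a d) (FS v' a' d') := by
  rw [Set.disjoint_left]
  rintro q ⟨-, -, -, -, h5⟩ ⟨-, -, -, -, h5'⟩
  rw [h5] at h5'
  simp at h5'

lemma GS_rec_zero (a d : ℕ) :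
    (GS 0 (a + 1) d).ncard = (if a = 0 ∧ d = 0 then 1 else 0) + (GS 0 a d).ncard := by
  have h1 : GS 0 (a + 1) d = {q | (q.count true = a + 1 ∧ q.count false = d ∧ Good q ∧
      valleys q = 0) ∧ q.getLast? = some true} := by
    ext q; simp only [GS, Set.mem_setOf_eq]; tauto
  rw [h1, ncard_last]
  by_cases had : a = 0 ∧ d = 0
  · obtain ⟨rfl, rfl⟩ := had
    have h2 : {r : List Bool | (r ++ [true]).count true = 0 + 1 ∧ (r ++ [true]).count false = 0 ∧
        Good (r ++ [true]) ∧ valleys (r ++ [true]) = 0} = {([] : List Bool)} := by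
      ext r
      simp only [Set.mem_setOf_eq, Set.mem_singleton_iff, count_append, good_concat_true,
        valleys_concat]
      constructor
      · rintro ⟨hr1, hr2, -, -⟩
        simp at hr1 hr2
        have : r.length = 0 := by rw [← count_true_add_count_false r]; omega
        exact length_eq_zero_iff.1 this
      · rintro rfl
        simp [good_nil, valleys_nil]
    rw [h2]
    have h3 : GS 0 0 0 = ∅ := GS_empty_a0 0 0
    simp [h3]
  · have h2 : {r : List Bool | (r ++ [true]).count true = a + 1 ∧ (r ++ [true]).count false = d ∧
        Good (r ++ [true]) ∧ valleys (r ++ [true]) = 0} = GS 0 a d := by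
      ext r
      simp only [Set.mem_setOf_eq, count_append, good_concat_true, valleys_concat, GS]
      constructor
      · rintro ⟨hr1, hr2, hr3, hr4⟩
        simp at hr1 hr2
        cases hl : r.getLast? with
        | none =>
          obtain rfl := getLast?_eq_none_iff.1 hl
          simp at hr1 hr2
          exact absurd ⟨hr1.symm, hr2.symm⟩ had
        | some b =>
          rcases b
          · rw [hl] at hr4; simp at hr4
          · rw [hl] at hr4
            simp at hr4
            exact ⟨hr1, hr2, hr3, hr4, rfl⟩
      · rintro ⟨hr1, hr2, hr3, hr4, hr5⟩
        rw [hr5]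
        simp [hr1, hr2, hr3, hr4]
    rw [h2, if_neg had]
    simp

lemma GS_rec_succ (v a d : ℕ) :
    (GS (v + 1) (a + 1) d).ncard = (GS (v + 1) a d).ncard + (FS v a d).ncard := by
  have h1 : GS (v + 1) (a + 1) d = {q | (q.count true = a + 1 ∧ q.count false = d ∧ Good q ∧
      valleys q = v + 1) ∧ q.getLast? = some true} := by
    ext q; simp only [GS, Set.mem_setOf_eq]; tauto
  rw [h1, ncard_last]
  have h2 : {r : List Bool | (r ++ [true]).count true = a + 1 ∧ (r ++ [true]).count false = d ∧
      Good (r ++ [true]) ∧ valleys (r ++ [true]) = v + 1} = GS (v + 1) a d ∪ FS v a d := by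
    ext r
    simp only [Set.mem_setOf_eq, count_append, good_concat_true, valleys_concat, Set.mem_union,
      GS, FS]
    constructor
    · rintro ⟨hr1, hr2, hr3, hr4⟩
      simp at hr1 hr2
      cases hl : r.getLast? with
      | none =>
        obtain rfl := getLast?_eq_none_iff.1 hl
        rw [valleys_nil] at hr4
        simp at hr4
      | some b =>
        rcases b
        · rw [hl] at hr4
          simp at hr4
          right
          exact ⟨hr1, hr2, hr3, by omega, rfl⟩
        · rw [hl] at hr4
          simp at hr4
          left
          exact ⟨hr1, hr2, hr3, hr4, rfl⟩
    · rintro (⟨hr1, hr2, hr3, hr4, hr5⟩ | ⟨hr1, hr2, hr3, hr4, hr5⟩) <;>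
        rw [hr5] <;> simp [hr1, hr2, hr3, hr4]
  rw [h2]
  exact ncard_split rfl (disj_GS_FS _ _ _ _ _ _) (finite_GS _ _ _) (finite_FS _ _ _)

lemma FS_rec (v a d : ℕ) (h : d + 1 ≤ a) :
    (FS v a (d + 1)).ncard = (GS v a d).ncard + (FS v a d).ncard := by
  have h1 : FS v a (d + 1) = {q | (q.count true = a ∧ q.count false = d + 1 ∧ Good q ∧
      valleys q = v) ∧ q.getLast? = some false} := by
    ext q; simp only [FS, Set.mem_setOf_eq]; tauto
  rw [h1, ncard_last]
  have h2 : {r : List Bool | (r ++ [false]).count true = a ∧ (r ++ [false]).count false = d + 1 ∧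
      Good (r ++ [false]) ∧ valleys (r ++ [false]) = v} = GS v a d ∪ FS v a d := by
    ext r
    simp only [Set.mem_setOf_eq, count_append, good_concat_false, valleys_concat, Set.mem_union,
      GS, FS]
    constructor
    · rintro ⟨hr1, hr2, ⟨hr3, hr3'⟩, hr4⟩
      simp at hr1 hr2
      cases hl : r.getLast? with
      | none =>
        obtain rfl := getLast?_eq_none_iff.1 hl
        simp at hr1
        omega
      | some b =>
        rcases b
        · right
          rw [hl] at hr4
          simp at hr4
          exact ⟨hr1, hr2, hr3, hr4, rfl⟩
        · left
          rw [hl] at hr4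
          simp at hr4
          exact ⟨hr1, hr2, hr3, hr4, rfl⟩
    · rintro (⟨hr1, hr2, hr3, hr4, hr5⟩ | ⟨hr1, hr2, hr3, hr4, hr5⟩) <;>
        rw [hr5] <;> simp [hr1, hr2, hr3, hr4] <;> omega
  rw [h2]
  exact ncard_split rfl (disj_GS_FS _ _ _ _ _ _) (finite_GS _ _ _) (finite_FS _ _ _)

lemma gf_a0 (v d : ℕ) : gf v 0 d = 0 := by
  rcases d <;> rcases v <;> simp [gf]

theorem refined : ∀ (N a d v : ℕ), a + d = N →
    ((GS v a d).ncard : ℤ) = gf v a d ∧ ((FS v a d).ncard : ℤ) = ff v a d := by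
  intro N
  induction N using Nat.strong_induction_on with
  | _ N IH =>
    intro a d v hN
    constructor
    · rcases a with _ | a
      · rw [GS_empty_a0, gf_a0]
        simp
      · rcases v with _ | v
        · rw [GS_rec_zero, E1]
          have h1 := (IH (a + d) (by omega) a d 0 rfl).1
          rw [← h1]
          push_cast
          split_ifs <;> ring
        · rw [GS_rec_succ, E2]
          have h1 := (IH (a + d) (by omega) a d (v + 1) rfl).1
          have h2 := (IH (a + d) (by omega) a d v rfl).2
          rw [← h1, ← h2]
          push_cast
          ring
    · rcases d with _ | d
      · rw [FS_empty_d0, ff_d0]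
        simp
      · rcases le_or_gt (d + 1) a with h | h
        · rw [FS_rec _ _ _ h, E3 h]
          have h1 := (IH (a + d) (by omega) a d v rfl).1
          have h2 := (IH (a + d) (by omega) a d v rfl).2
          rw [← h1, ← h2]
          push_cast
          ring
        · rw [FS_empty_lt h, ff_lt _ h]
          simp

lemma GS_card (v a d : ℕ) : ((GS v a d).ncard : ℤ) = gf v a d :=
  (refined (a + d) a d v rfl).1

lemma FS_card (v a d : ℕ) : ((FS v a d).ncard : ℤ) = ff v a d :=
  (refined (a + d) a d v rfl).2

/- ### the A/B sets -/

lemma good_singleton_true : Good [true] := by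
  intro i
  rcases i with _ | i <;> simp

lemma AS_one_zero : AS 1 0 = {[true]} := by
  ext q
  simp only [AS, Set.mem_setOf_eq, Set.mem_singleton_iff]
  constructor
  · rintro ⟨hlen, hg, hv, hl⟩
    obtain ⟨b, rfl⟩ := length_eq_one_iff.1 hlen
    simp at hl
    rw [hl]
  · rintro rfl
    exact ⟨rfl, good_singleton_true, valleys_single true, rfl⟩

lemma AS_one_succ (v : ℕ) : AS 1 (v + 1) = ∅ := by
  ext q
  simp only [AS, Set.mem_setOf_eq, Set.mem_empty_iff_false, iff_false, not_and]
  rintro hlen hg hv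
  obtain ⟨b, rfl⟩ := length_eq_one_iff.1 hlen
  rw [valleys_single] at hv
  omega

lemma BS_one (v : ℕ) : BS 1 v = ∅ := by
  ext q
  simp only [BS, Set.mem_setOf_eq, Set.mem_empty_iff_false, iff_false, not_and]
  rintro hlen hg hv hl
  obtain ⟨b, rfl⟩ := length_eq_one_iff.1 hlen
  simp at hl
  subst hl
  have := hg 1
  simp at this

lemma disj_AS_BS (n n' v v' : ℕ) : Disjoint (AS n v) (BS n' v') := by
  rw [Set.disjoint_left]
  rintro q ⟨-, -, -, h5⟩ ⟨-, -, -, h5'⟩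
  rw [h5] at h5'
  simp at h5'

lemma AS_rec_zero (n : ℕ) (hn : 1 ≤ n) : (AS (n + 1) 0).ncard = (AS n 0).ncard := by
  have h1 : AS (n + 1) 0 = {q | (q.length = n + 1 ∧ Good q ∧ valleys q = 0) ∧
      q.getLast? = some true} := by
    ext q; simp only [AS, Set.mem_setOf_eq]; tauto
  rw [h1, ncard_last]
  congr 1
  ext r
  simp only [Set.mem_setOf_eq, length_append, length_cons, length_nil, good_concat_true,
    valleys_concat, AS]
  constructor
  · rintro ⟨hr1, hr2, hr3⟩
    cases hl : r.getLast? with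
    | none =>
      obtain rfl := getLast?_eq_none_iff.1 hl
      simp at hr1
      omega
    | some b =>
      rcases b
      · rw [hl] at hr3
        simp at hr3
      · rw [hl] at hr3
        simp at hr3
        exact ⟨by omega, hr2, hr3, rfl⟩
  · rintro ⟨hr1, hr2, hr3, hr4⟩
    rw [hr4]
    simp [hr1, hr2, hr3]

lemma AS_rec_succ (n v : ℕ) (hn : 1 ≤ n) :
    (AS (n + 1) (v + 1)).ncard = (AS n (v + 1)).ncard + (BS n v).ncard := by
  have h1 : AS (n + 1) (v + 1) = {q | (q.length = n + 1 ∧ Good q ∧ valleys q = v + 1) ∧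
      q.getLast? = some true} := by
    ext q; simp only [AS, Set.mem_setOf_eq]; tauto
  rw [h1, ncard_last]
  have h2 : {r : List Bool | (r ++ [true]).length = n + 1 ∧ Good (r ++ [true]) ∧
      valleys (r ++ [true]) = v + 1} = AS n (v + 1) ∪ BS n v := by
    ext r
    simp only [Set.mem_setOf_eq, length_append, length_cons, length_nil, good_concat_true,
      valleys_concat, Set.mem_union, AS, BS]
    constructor
    · rintro ⟨hr1, hr2, hr3⟩
      cases hl : r.getLast? with
      | none =>
        obtain rfl := getLast?_eq_none_iff.1 hl
        simp at hr1
        omega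
      | some b =>
        rcases b
        · rw [hl] at hr3
          simp at hr3
          right
          exact ⟨by omega, hr2, by omega, rfl⟩
        · rw [hl] at hr3
          simp at hr3
          left
          exact ⟨by omega, hr2, hr3, rfl⟩
    · rintro (⟨hr1, hr2, hr3, hr4⟩ | ⟨hr1, hr2, hr3, hr4⟩) <;> rw [hr4] <;>
        simp [hr1, hr2, hr3]
  rw [h2]
  exact ncard_split rfl (disj_AS_BS _ _ _ _) (finite_AS _ _) (finite_BS _ _)

def ZS (n v : ℕ) : Set (List Bool) :=
  {q | (q.length = n ∧ Good q ∧ valleys q = v ∧ q.getLast? = some false) ∧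
    q.count true = q.count false}

lemma finite_ZS (n v : ℕ) : (ZS n v).Finite := finite_of_len (fun q hq => hq.1.1)

lemma ZS_odd {n : ℕ} (v : ℕ) (hn : n % 2 = 1) : ZS n v = ∅ := by
  ext q
  simp only [ZS, Set.mem_setOf_eq, Set.mem_empty_iff_false, iff_false, not_and]
  rintro ⟨hlen, -, -, -⟩ hc
  have := count_true_add_count_false q
  omega

lemma ZS_even (s v : ℕ) : ZS (2 * s) v = FS v s s := by
  ext q
  simp only [ZS, FS, Set.mem_setOf_eq]
  constructor
  · rintro ⟨⟨hlen, hg, hv, hl⟩, hc⟩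
    have := count_true_add_count_false q
    refine ⟨by omega, by omega, hg, hv, hl⟩
  · rintro ⟨h1, h2, h3, h4, h5⟩
    have := count_true_add_count_false q
    exact ⟨⟨by omega, h3, h4, h5⟩, by omega⟩

lemma BS_rec (n v : ℕ) (hn : 1 ≤ n) :
    (BS (n + 1) v).ncard + (ZS n v).ncard = (AS n v).ncard + (BS n v).ncard := by
  have h1 : BS (n + 1) v = {q | (q.length = n + 1 ∧ Good q ∧ valleys q = v) ∧
      q.getLast? = some false} := by
    ext q; simp only [BS, Set.mem_setOf_eq]; tauto
  rw [h1, ncard_last]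
  set W : Set (List Bool) := {r | (r ++ [false]).length = n + 1 ∧ Good (r ++ [false]) ∧
    valleys (r ++ [false]) = v} with hW
  have hWfin : W.Finite := by
    refine finite_of_len (n := n) ?_
    rintro q ⟨h1, -, -⟩
    simp at h1
    omega
  have hdisj : Disjoint W (ZS n v) := by
    rw [Set.disjoint_left]
    rintro q ⟨-, hg, -⟩ ⟨-, hc⟩
    rw [good_concat_false] at hg
    omega
  have hunion : W ∪ ZS n v = AS n v ∪ BS n v := by
    ext r
    simp only [hW, ZS, Set.mem_union, Set.mem_setOf_eq, length_append, length_cons, length_nil,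
      good_concat_false, valleys_concat, AS, BS]
    constructor
    · rintro (⟨hr1, ⟨hr2, hr2'⟩, hr3⟩ | ⟨⟨hr1, hr2, hr3, hr4⟩, hr5⟩)
      · cases hl : r.getLast? with
        | none =>
          obtain rfl := getLast?_eq_none_iff.1 hl
          simp at hr2'
        | some b =>
          rcases b
          · right
            rw [hl] at hr3
            simp at hr3
            exact ⟨by omega, hr2, hr3, rfl⟩
          · left
            rw [hl] at hr3
            simp at hr3
            exact ⟨by omega, hr2, hr3, rfl⟩
      · right
        exact ⟨hr1, hr2, hr3, hr4⟩
    · rintro (⟨hr1, hr2, hr3, hr4⟩ | ⟨hr1, hr2, hr3, hr4⟩)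
      · left
        have := ends_true_strict hr2 hr4
        rw [hr4]
        simp [hr1, hr2, hr3]
        omega
      · rcases Nat.lt_or_ge (r.count false) (r.count true) with hc | hc
        · left
          rw [hr4]
          simp [hr1, hr2, hr3]
          omega
        · right
          have := good_count hr2
          exact ⟨⟨hr1, hr2, hr3, hr4⟩, by omega⟩
  have := Set.ncard_union_eq hdisj hWfin (finite_ZS n v)
  rw [← this, hunion]
  exact Set.ncard_union_eq (disj_AS_BS _ _ _ _) (finite_AS _ _) (finite_BS _ _)

theorem AB : ∀ n : ℕ, 1 ≤ n → ∀ v : ℕ,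
    ((AS n v).ncard : ℤ) = ch ((n - 1) / 2) v * ch (n / 2) v ∧
    ((BS n v).ncard : ℤ) = ch ((n - 1) / 2) v * ch (n / 2) (v + 1) := by
  intro n
  induction n with
  | zero => intro h; exact absurd h (by omega)
  | succ n ih =>
    intro hn v
    rcases Nat.eq_zero_or_pos n with rfl | hpos
    · constructor
      · rcases v with _ | v
        · rw [AS_one_zero, Set.ncard_singleton]
          simp [ch]
        · rw [AS_one_succ]
          rw [ch_big (show 0 < v + 1 by omega)]
          simp
      · rw [BS_one]
        rw [ch_big (show 0 < v + 1 by omega)]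
        simp
    · have IHA := fun w => (ih hpos w).1
      have IHB := fun w => (ih hpos w).2
      clear ih
      have hsub : n + 1 - 1 = n := rfl
      constructor
      · rcases v with _ | v
        · rw [AS_rec_zero n hpos, IHA 0, hsub]
          simp [ch_zero]
        · rw [AS_rec_succ n v hpos]
          push_cast
          rw [IHA (v + 1), IHB v]
          have h2 : (n + 1) / 2 = (n - 1) / 2 + 1 := by omega
          rw [h2, ch_pascal]
          ring
      · have hZcast := BS_rec n v hpos
        have hcast : ((BS (n + 1) v).ncard : ℤ) + ((ZS n v).ncard : ℤ)
            = ((AS n v).ncard : ℤ) + ((BS n v).ncard : ℤ) := by exact_mod_cast hZcast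
        rcases Nat.even_or_odd n with ⟨s, hs⟩ | hodd
        · -- n = s + s
          have hns : n = 2 * s := by omega
          have hs1 : 1 ≤ s := by omega
          obtain ⟨e, rfl⟩ : ∃ e, s = e + 1 := ⟨s - 1, by omega⟩
          rw [show ((ZS n v).ncard : ℤ) = ((FS v (e + 1) (e + 1)).ncard : ℤ) by
            rw [hns, ZS_even]] at hcast
          rw [FS_card] at hcast
          have hAv := IHA v
          have hBv := IHB v
          rw [hsub]
          have e1 : (n + 1) / 2 = e + 1 := by omega
          have e2 : n / 2 = e + 1 := by omega
          have e3 : (n - 1) / 2 = e := by omega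
          rw [e1, e2]
          rw [hAv, hBv, e2, e3] at hcast
          rcases v with _ | w
          · rw [ff_zero (by omega) le_rfl] at hcast
            rw [ch_pascal e 0] at hcast ⊢
            simp only [ch_zero] at hcast ⊢
            linarith
          · rw [ff_succ _ (by omega) le_rfl] at hcast
            simp only [Nat.add_sub_cancel] at hcast
            rw [ch_pascal e (w + 1), ch_pascal e w] at hcast ⊢
            linarith
        · -- n odd
          obtain ⟨m, hm⟩ := hodd
          rw [ZS_odd v (by omega)] at hcast
          simp only [Set.ncard_empty, Nat.cast_zero, add_zero] at hcast
          rw [hcast, IHA v, IHB v, hsub]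
          have e1 : (n + 1) / 2 = m + 1 := by omega
          have e2 : n / 2 = m := by omega
          have e3 : (n - 1) / 2 = m := by omega
          rw [e1, e2, e3, ch_pascal]
          ring

/- ### the folding bijection -/

def Phi (q : List Bool) : List Bool := q ++ rc q

lemma drop_reverse (l : List Bool) (j : ℕ) :
    l.reverse.drop j = (l.take (l.length - j)).reverse := by
  rcases le_or_gt j l.length with h | h
  · conv_lhs => rw [← take_append_drop (l.length - j) l]
    rw [reverse_append, drop_append]
    have hlen : (l.drop (l.length - j)).reverse.length = j := by
      simp
      omega
    rw [drop_eq_nil_of_le (by omega), hlen, Nat.sub_self, drop_zero, nil_append]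
  · rw [drop_eq_nil_of_le (by simp; omega), show l.length - j = 0 by omega, take_zero,
      reverse_nil]

lemma rc_drop (q : List Bool) (j : ℕ) : (rc q).drop j = rc (q.take (q.length - j)) := by
  simp only [rc, ← map_drop, drop_reverse]

lemma count_take_drop (p : List Bool) (i : ℕ) (b : Bool) :
    (p.take i).count b + (p.drop i).count b = p.count b := by
  rw [← count_append, take_append_drop]

lemma phi_dyck {q : List Bool} {n : ℕ} (hlen : q.length = n) (hg : Good q) :
    IsDyckPath n (Phi q) := by
  have hcnt := count_true_add_count_false q
  have hcle := good_count hg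
  refine ⟨by simp [Phi, length_rc]; omega, ?_, ?_⟩
  · simp only [Phi, count_append, count_rc, Bool.not_true]
    omega
  intro i
  rcases le_or_gt i n with h | h
  · rw [Phi, take_append_of_le_length (by omega)]
    exact hg i
  · have h1 := count_take_drop (Phi q) i true
    have h2 := count_take_drop (Phi q) i false
    have hT : (Phi q).count true = n := by
      simp only [Phi, count_append, count_rc, Bool.not_true]
      omega
    have hF : (Phi q).count false = n := by
      simp only [Phi, count_append, count_rc, Bool.not_false]
      omega
    have hdrop : (Phi q).drop i = rc (q.take (q.length - (i - n))) := by
      rw [Phi, drop_append, drop_eq_nil_of_le (by omega), nil_append, rc_drop,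
        hlen]
    have hkey : ((Phi q).drop i).count true ≤ ((Phi q).drop i).count false := by
      rw [hdrop]
      simp only [count_rc, Bool.not_true, Bool.not_false]
      exact hg _
    omega

lemma map_not_not (q : List Bool) : q.map ((fun b => !b) ∘ fun b => !b) = q := by
  induction q with
  | nil => rfl
  | cons a t ih => simp [ih]

lemma phi_symm (q : List Bool) : IsSymmetric (Phi q) := by
  simp [Phi, IsSymmetric, rc, map_map, Function.comp, Bool.not_not]
  exact map_not_not q

lemma phi_valleys {q : List Bool} (hq : q ≠ []) :
    valleys (Phi q) = 2 * valleys q + (if q.getLast? = some false then 1 else 0) := by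
  have hrc : rc q ≠ [] := by simp [rc, hq]
  rw [Phi, valleys_append q (rc q) hrc, valleys_rc, head?_rc]
  cases hl : q.getLast? with
  | none => exact absurd (getLast?_eq_none_iff.1 hl) hq
  | some b => rcases b <;> simp <;> omega

lemma u_eq (n k : ℕ) (hn : 1 ≤ n) :
    {p : List Bool | IsDyckPath n p ∧ IsSymmetric p ∧ valleys p = k}
      = Phi '' {q | q.length = n ∧ Good q ∧
          2 * valleys q + (if q.getLast? = some false then 1 else 0) = k} := by
  ext p
  constructor
  · rintro ⟨⟨hplen, hpcnt, hppre⟩, hsym, hval⟩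
    have hqlen : (p.take n).length = n := by
      rw [length_take, hplen]
      omega
    have hgood : Good (p.take n) := fun i => by rw [take_take]; exact hppre _
    have hphi : Phi (p.take n) = p := by
      rw [Phi]
      conv_rhs => rw [← take_append_drop n p]
      congr 1
      have : p.drop n = rc (p.take n) := by
        conv_lhs => rw [← hsym]
        rw [← map_drop, drop_reverse, hplen, show 2 * n - n = n from by omega, rc]
      rw [this]
    have hq : p.take n ≠ [] := by
      intro h0
      rw [h0] at hqlen
      simp at hqlen
      omega
    have hv2 : valleys p = 2 * valleys (p.take n) +
        (if (p.take n).getLast? = some false then 1 else 0) := by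
      conv_lhs => rw [← hphi]
      exact phi_valleys hq
    exact ⟨p.take n, ⟨hqlen, hgood, by omega⟩, hphi⟩
  · rintro ⟨q, ⟨hqlen, hg, hwt⟩, rfl⟩
    have hq : q ≠ [] := by
      intro h
      subst h
      simp at hqlen
      omega
    exact ⟨phi_dyck hqlen hg, phi_symm q, by rw [phi_valleys hq]; omega⟩

lemma phi_injOn (n : ℕ) (S : Set (List Bool)) (hS : ∀ q ∈ S, q.length = n) :
    Set.InjOn Phi S := by
  intro q hq q' hq' h
  have h1 : (Phi q).take n = q := by rw [Phi, take_left' (hS q hq)]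
  have h2 : (Phi q').take n = q' := by rw [Phi, take_left' (hS q' hq')]
  rw [← h1, ← h2, h]

lemma half_even (n v : ℕ) (hn : 1 ≤ n) :
    {q : List Bool | q.length = n ∧ Good q ∧
        2 * valleys q + (if q.getLast? = some false then 1 else 0) = 2 * v} = AS n v := by
  ext q
  simp only [Set.mem_setOf_eq, AS]
  constructor
  · rintro ⟨h1, h2, h3⟩
    cases hl : q.getLast? with
    | none =>
      obtain rfl := getLast?_eq_none_iff.1 hl
      simp at h1
      omega
    | some b =>
      rcases b
      · rw [hl] at h3
        simp at h3
        omega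
      · rw [hl] at h3
        simp at h3
        exact ⟨h1, h2, by omega, rfl⟩
  · rintro ⟨h1, h2, h3, h4⟩
    rw [h4]
    simp [h1, h2]
    omega

lemma half_odd (n v : ℕ) (hn : 1 ≤ n) :
    {q : List Bool | q.length = n ∧ Good q ∧
        2 * valleys q + (if q.getLast? = some false then 1 else 0) = 2 * v + 1} = BS n v := by
  ext q
  simp only [Set.mem_setOf_eq, BS]
  constructor
  · rintro ⟨h1, h2, h3⟩
    cases hl : q.getLast? with
    | none =>
      obtain rfl := getLast?_eq_none_iff.1 hl
      simp at h1
      omega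
    | some b =>
      rcases b
      · rw [hl] at h3
        simp at h3
        exact ⟨h1, h2, by omega, rfl⟩
      · rw [hl] at h3
        simp at h3
        omega
  · rintro ⟨h1, h2, h3, h4⟩
    rw [h4]
    simp [h1, h2]
    omega

end SDP

theorem symmetric_dyck_count (n k : ℕ) (hn : 1 ≤ n) :
    u n k = ((n - 1) / 2).choose (k / 2) * (n / 2).choose ((k + 1) / 2) := by
  open SDP in
  rcases Nat.even_or_odd k with ⟨v, hv⟩ | ⟨v, hv⟩
  · have hk : k = 2 * v := by omega
    subst hk
    rw [u, u_eq n (2 * v) hn, half_even n v hn,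
      Set.ncard_image_of_injOn (phi_injOn n _ (fun q hq => hq.1))]
    have := (AB n hn v).1
    have e1 : 2 * v / 2 = v := by omega
    have e2 : (2 * v + 1) / 2 = v := by omega
    rw [e1, e2]
    simp only [ch] at this
    exact_mod_cast this
  · subst hv
    rw [u, u_eq n (2 * v + 1) hn, half_odd n v hn,
      Set.ncard_image_of_injOn (phi_injOn n _ (fun q hq => hq.1))]
    have := (AB n hn v).2
    have e1 : (2 * v + 1) / 2 = v := by omega
    have e2 : (2 * v + 1 + 1) / 2 = v + 1 := by omega
    rw [e1, e2]
    simp only [ch] at this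
    exact_mod_cast this
end

section
/- For all integers n ≥ 2 and k ≥ 1, u(n, 2k) = u(n-1, 2k) + u(n-1, 2k-1). -/
def jmp (a : Option Bool) (b : Bool) : ℕ := if a = some false ∧ b = true then 1 else 0

lemma valleys_nil : valleys ([] : List Bool) = 0 := rfl
lemma valleys_single (a : Bool) : valleys [a] = 0 := rfl

lemma valleys_cons_cons (a b : Bool) (t : List Bool) :
    valleys (a :: b :: t) = jmp (some a) b + valleys (b :: t) := by
  simp only [valleys, List.tail_cons, List.zip_cons_cons, List.count_cons, jmp]
  rw [Nat.add_comm]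
  congr 1
  cases a <;> cases b <;> simp

lemma valleys_append (l₁ : List Bool) (b : Bool) (l₂ : List Bool) :
    valleys (l₁ ++ b :: l₂) = valleys l₁ + jmp l₁.getLast? b + valleys (b :: l₂) := by
  induction l₁ with
  | nil => simp [valleys_nil, jmp]
  | cons a t ih =>
    cases t with
    | nil =>
      rw [show ([a] ++ b :: l₂) = a :: b :: l₂ from rfl, valleys_cons_cons, valleys_single]
      simp
    | cons c t' =>
      rw [show ((a :: c :: t') ++ b :: l₂) = a :: c :: (t' ++ b :: l₂) from rfl,
        valleys_cons_cons, show (c :: (t' ++ b :: l₂)) = (c :: t') ++ b :: l₂ from rfl, ih,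
        valleys_cons_cons, show (a :: c :: t').getLast? = (c :: t').getLast? from by
          simp [List.getLast?_cons_cons]]
      omega

lemma valleys_flip_reverse (l : List Bool) :
    valleys (l.reverse.map (fun b => !b)) = valleys l := by
  induction l with
  | nil => rfl
  | cons x t ih =>
    have h1 : (x :: t).reverse.map (fun b => !b)
        = (t.reverse.map (fun b => !b)) ++ (!x) :: [] := by simp
    rw [h1, valleys_append, ih, valleys_single]
    cases t with
    | nil => simp [valleys_nil, valleys_single, jmp]
    | cons b t' =>
      rw [valleys_cons_cons]
      have h2 : ((b :: t').reverse.map (fun b => !b)).getLast? = some (!b) := by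
        simp [List.getLast?_map, List.head?_reverse]
      rw [h2]
      have : jmp (some !b) (!x) = jmp (some x) b := by
        cases x <;> cases b <;> simp [jmp]
      omega

lemma count_true_map_not (l : List Bool) :
    (l.map (fun b => !b)).count true = l.count false := by
  induction l with
  | nil => rfl
  | cons a t ih => cases a <;> simp [List.count_cons, ih]

lemma count_false_map_not (l : List Bool) :
    (l.map (fun b => !b)).count false = l.count true := by
  induction l with
  | nil => rfl
  | cons a t ih => cases a <;> simp [List.count_cons, ih]

lemma count_false_add_count_true (l : List Bool) :
    l.count false + l.count true = l.length := by
  induction l with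
  | nil => rfl
  | cons a t ih => cases a <;> simp [List.count_cons] <;> omega

/-- the "statistics" on half-paths -/
def g (q : List Bool) : ℕ := 2 * valleys q + jmp q.getLast? true

lemma valleys_phi (q : List Bool) (hq : q ≠ []) :
    valleys (q ++ q.reverse.map (fun b => !b)) = g q := by
  rcases List.eq_nil_or_concat q with h | ⟨q', a, rfl⟩
  · exact absurd h hq
  rw [List.concat_eq_append]
  have h1 : (q' ++ [a]).reverse.map (fun b => !b)
      = (!a) :: (q'.reverse.map (fun b => !b)) := by simp
  rw [h1, valleys_append, ← h1, valleys_flip_reverse, g, List.getLast?_concat]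
  have : jmp (some a) (!a) = jmp (some a) true := by cases a <;> simp [jmp]
  omega

def Bset (n m : ℕ) : Set (List Bool) :=
  {q | q.length = n ∧ (∀ i, (q.take i).count false ≤ (q.take i).count true) ∧ g q = m}

lemma u_eq_ncard_B (n m : ℕ) (hn : 1 ≤ n) : u n m = (Bset n m).ncard := by
  have himg : {p : List Bool | IsDyckPath n p ∧ IsSymmetric p ∧ valleys p = m}
      = (fun q => q ++ q.reverse.map (fun b => !b)) '' Bset n m := by
    ext p
    constructor
    · rintro ⟨⟨hlen, hct, hcond⟩, hsym, hval⟩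
      set q := p.take n with hq
      have hlq : q.length = n := by
        rw [hq, List.length_take, hlen]; omega
      have hld : (p.drop n).length = n := by
        rw [List.length_drop, hlen]; omega
      have hsplit : q ++ p.drop n = p := List.take_append_drop n p
      have h2 : p.drop n = q.reverse.map (fun b => !b) := by
        have h3 : ((p.drop n).reverse.map (fun b => !b)) ++ (q.reverse.map (fun b => !b)) = q ++ p.drop n := by
          conv_lhs => rw [show (p.drop n).reverse.map (fun b => !b) ++ q.reverse.map (fun b => !b)
            = ((q ++ p.drop n).reverse.map (fun b => !b)) from by simp]
          rw [hsplit]; exact hsym.symm.symm ▸ hsym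
        have hlen' : ((p.drop n).reverse.map (fun b => !b)).length = q.length := by
          simp [hld, hlq]; omega
        exact (List.append_inj h3 hlen').2.symm
      have hphi : p = q ++ q.reverse.map (fun b => !b) := by
        rw [← h2, hsplit]
      refine ⟨q, ⟨hlq, ?_, ?_⟩, hphi.symm⟩
      · intro i
        have : q.take i = p.take (min i n) := by
          rw [hq, List.take_take]
        rw [this]; exact hcond _
      · rw [← valleys_phi q (by intro h; rw [h] at hlq; simp at hlq; omega), ← hphi]
        exact hval
    · rintro ⟨q, ⟨hlq, hcond, hg⟩, rfl⟩
      have hqne : q ≠ [] := by intro h; rw [h] at hlq; simp at hlq; omega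
      have hcnt : q.count false + q.count true = n := by
        rw [count_false_add_count_true, hlq]
      refine ⟨⟨?_, ?_, ?_⟩, ?_, ?_⟩
      · simp [hlq]; omega
      · rw [List.count_append, count_true_map_not, List.count_reverse]; omega
      · intro i
        rw [List.take_append, List.count_append, List.count_append]
        set m' := i - q.length with hm'
        have htr : List.take m' (q.reverse.map (fun b => !b))
            = ((q.drop (q.length - m')).reverse.map (fun b => !b)) := by
          rw [← List.map_take, List.take_reverse]
        rw [htr]
        have e1 : (((q.drop (q.length - m')).reverse.map (fun b => !b))).count false
            = (q.drop (q.length - m')).count true := by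
          rw [count_false_map_not, List.count_reverse]
        have e2 : (((q.drop (q.length - m')).reverse.map (fun b => !b))).count true
            = (q.drop (q.length - m')).count false := by
          rw [count_true_map_not, List.count_reverse]
        rw [e1, e2]
        have hsplitq : q.take (q.length - m') ++ q.drop (q.length - m') = q :=
          List.take_append_drop _ q
        have c1 : (q.take (q.length - m')).count false + (q.drop (q.length - m')).count false
            = q.count false := by rw [← List.count_append, hsplitq]
        have c2 : (q.take (q.length - m')).count true + (q.drop (q.length - m')).count true
            = q.count true := by rw [← List.count_append, hsplitq]
        have h3 := hcond (q.length - m')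
        have h4 := hcond i
        rcases le_or_gt i q.length with hi | hi
        · have : m' = 0 := by omega
          simp [this]
          have : q.take i ++ [] = q.take i := by simp
          omega
        · have : q.take i = q := List.take_of_length_le (by omega)
          rw [this]
          omega
      · show IsSymmetric _
        unfold IsSymmetric
        simp only [List.reverse_append, ← List.map_reverse, List.reverse_reverse, List.map_append,
          List.map_map]
        congr 1
        · simp [Function.comp_def]
      · rw [valleys_phi q hqne]; exact hg
  rw [u, himg, Set.ncard_image_of_injOn]
  intro q1 h1 q2 h2 heq
  have e1 : q1 = List.take n (q1 ++ q1.reverse.map (fun b => !b)) := by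
    rw [← h1.1, List.take_left]
  have e2 : q2 = List.take n (q2 ++ q2.reverse.map (fun b => !b)) := by
    rw [← h2.1, List.take_left]
  rw [e1, e2]; exact congrArg (List.take n) heq

lemma jmp_true_cases (a : Option Bool) : jmp a true = 0 ∨ jmp a true = 1 := by
  unfold jmp; split <;> simp

lemma Bset_step (n k : ℕ) (hn : 2 ≤ n) (hk : 1 ≤ k) :
    Bset n (2 * k) = (fun q => q ++ [true]) '' (Bset (n - 1) (2 * k) ∪ Bset (n - 1) (2 * k - 1)) := by
  ext q
  constructor
  · rintro ⟨hlq, hcond, hg⟩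
    have hqne : q ≠ [] := by intro h; rw [h] at hlq; simp at hlq; omega
    rcases List.eq_nil_or_concat q with h | ⟨q', a, rfl⟩
    · exact absurd h hqne
    rw [List.concat_eq_append] at *
    have hlq' : q'.length = n - 1 := by
      simp at hlq; omega
    have hglast : (q' ++ [a]).getLast? = some a := List.getLast?_concat
    have hval : valleys (q' ++ [a]) = valleys q' + jmp q'.getLast? a := by
      rw [valleys_append, valleys_single]; omega
    have hja : jmp (some a) true = 0 := by
      cases a
      · exfalso
        rw [g, hglast, hval] at hg
        have hj := jmp_true_cases q'.getLast?
        simp [jmp] at hg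
        omega
      · simp [jmp]
    have ha : a = true := by
      cases a
      · simp [jmp] at hja
      · rfl
    subst ha
    have hcond' : ∀ i, (q'.take i).count false ≤ (q'.take i).count true := by
      intro i
      rcases le_or_gt i (n - 1) with hi | hi
      · have : (q' ++ [true]).take i = q'.take i := by
          rw [List.take_append]
          have : i - q'.length = 0 := by omega
          simp [this]
        have := hcond i
        rw [‹(q' ++ [true]).take i = q'.take i›] at this
        exact this
      · have e1 : q'.take i = q' := List.take_of_length_le (by omega)
        have e2 : (q' ++ [true]).take (n - 1) = q' := by
          rw [List.take_append]
          have h0 : n - 1 - q'.length = 0 := by omega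
          have h1 : q'.take (n - 1) = q' := List.take_of_length_le (by omega)
          simp [h0, h1]
        have := hcond (n - 1)
        rw [e2] at this
        rw [e1]
        exact this
    have hgval : 2 * (valleys q' + jmp q'.getLast? true) = 2 * k := by
      rw [g, hglast, hval] at hg
      simp [jmp] at hg ⊢
      omega
    have hj := jmp_true_cases q'.getLast?
    have hg' : g q' = 2 * k ∨ g q' = 2 * k - 1 := by
      rw [g]; omega
    rcases hg' with h | h
    · exact ⟨q', Or.inl ⟨hlq', hcond', h⟩, rfl⟩
    · exact ⟨q', Or.inr ⟨hlq', hcond', h⟩, rfl⟩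
  · rintro ⟨q', hq', rfl⟩
    have hlq' : q'.length = n - 1 := by
      rcases hq' with ⟨h, _, _⟩ | ⟨h, _, _⟩ <;> exact h
    have hcond' : ∀ i, (q'.take i).count false ≤ (q'.take i).count true := by
      rcases hq' with ⟨_, h, _⟩ | ⟨_, h, _⟩ <;> exact h
    have hg' : g q' = 2 * k ∨ g q' = 2 * k - 1 := by
      rcases hq' with ⟨_, _, h⟩ | ⟨_, _, h⟩
      · exact Or.inl h
      · exact Or.inr h
    refine ⟨by simp [hlq']; omega, ?_, ?_⟩
    · intro i
      rw [List.take_append, List.count_append, List.count_append]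
      have h0 : List.count false (List.take (i - q'.length) [true]) = 0 := by
        cases (i - q'.length) <;> simp
      have := hcond' i
      omega
    · have hval : valleys (q' ++ [true]) = valleys q' + jmp q'.getLast? true := by
        rw [valleys_append, valleys_single]; omega
      rw [g, List.getLast?_concat, hval]
      have hj := jmp_true_cases q'.getLast?
      have hjt : jmp (some true) true = 0 := by simp [jmp]
      rw [hjt]
      rw [g] at hg'
      omega

theorem u_even_recurrence (n k : ℕ) (hn : 2 ≤ n) (hk : 1 ≤ k) :
    u n (2 * k) = u (n - 1) (2 * k) + u (n - 1) (2 * k - 1) := by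
  have hfin1 : (Bset (n - 1) (2 * k)).Finite :=
    (List.finite_length_eq Bool (n - 1)).subset (fun q hq => hq.1)
  have hfin2 : (Bset (n - 1) (2 * k - 1)).Finite :=
    (List.finite_length_eq Bool (n - 1)).subset (fun q hq => hq.1)
  have hdisj : Disjoint (Bset (n - 1) (2 * k)) (Bset (n - 1) (2 * k - 1)) := by
    rw [Set.disjoint_left]
    rintro q ⟨_, _, h1⟩ ⟨_, _, h2⟩
    omega
  rw [u_eq_ncard_B n _ (by omega), u_eq_ncard_B (n - 1) _ (by omega),
    u_eq_ncard_B (n - 1) _ (by omega), Bset_step n k hn hk,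
    Set.ncard_image_of_injOn (fun q1 _ q2 _ h => List.append_cancel_right h),
    Set.ncard_union_eq hdisj hfin1 hfin2]
end

section
/- For all integers n ≥ 1 and k ≥ 0, u(2n, 2k+1) = u(2n-1, 2k+1) + u(2n-1, 2k). -/
/-! ### Auxiliary development -/

/-- Recursive valley counter. -/
def vc : List Bool → ℕ
  | [] => 0
  | [_] => 0
  | a :: b :: rest => (if a = false ∧ b = true then 1 else 0) + vc (b :: rest)

lemma valleys_eq_vc : ∀ p : List Bool, valleys p = vc p
  | [] => rfl
  | [_] => rfl
  | a :: b :: rest => by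
    have ih := valleys_eq_vc (b :: rest)
    unfold valleys at ih ⊢
    simp only [List.tail_cons, List.zip_cons_cons, List.count_cons] at ih ⊢
    rw [ih]
    cases a <;> cases b <;> simp [vc] <;> omega

lemma vc_cons (a : Bool) (l : List Bool) :
    vc (a :: l) = (if a = false ∧ l.head? = some true then 1 else 0) + vc l := by
  cases l with
  | nil => simp [vc]
  | cons b t => cases b <;> simp [vc]

lemma vc_append : ∀ l₁ l₂ : List Bool, vc (l₁ ++ l₂) =
    vc l₁ + vc l₂ + (if l₁.getLast? = some false ∧ l₂.head? = some true then 1 else 0)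
  | [], l₂ => by simp [vc]
  | a :: l₁, l₂ => by
    rw [List.cons_append, vc_cons, vc_append l₁ l₂, vc_cons]
    cases l₁ with
    | nil =>
      cases a <;> simp [vc] <;> omega
    | cons b t =>
      rw [List.getLast?_cons_cons]
      simp only [List.cons_append, List.head?_cons]
      cases a <;> cases b <;> simp <;> omega

/-- Reverse-complement of a path. -/
def rc (l : List Bool) : List Bool := l.reverse.map (fun b => !b)

lemma rc_cons (a : Bool) (l : List Bool) : rc (a :: l) = rc l ++ [!a] := by
  simp [rc]

lemma rc_rc (l : List Bool) : rc (rc l) = l := by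
  simp [rc, List.map_reverse, List.map_map, Function.comp_def, Bool.not_not]

lemma vc_rc : ∀ l : List Bool, vc (rc l) = vc l
  | [] => rfl
  | a :: l => by
    rw [rc_cons, vc_append, vc_rc l]
    conv_rhs => rw [vc_cons]
    have h1 : (rc l).getLast? = l.head?.map (fun b => !b) := by
      simp [rc, List.getLast?_map, List.getLast?_reverse]
    rw [h1]
    cases hl : l.head? with
    | none => cases a <;> simp [vc]
    | some b => cases a <;> cases b <;> simp [vc] <;> omega

lemma count_not_map (l : List Bool) (b : Bool) :
    (l.map (fun x => !x)).count b = l.count (!b) := by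
  induction l with
  | nil => simp
  | cons a t ih => cases a <;> cases b <;> simp [List.count_cons, ih]

lemma count_rc (l : List Bool) (b : Bool) : (rc l).count b = l.count (!b) := by
  rw [rc, count_not_map, List.count_reverse]

/-- The condition that a half-path stays nonnegative. -/
def halfCond (h : List Bool) : Prop :=
  ∀ i, (h.take i).count false ≤ (h.take i).count true

/-- Symmetric Dyck paths with `k` valleys, described by their first halves. -/
def halfSet (m k : ℕ) : Set (List Bool) :=
  {h | h.length = m ∧ halfCond h ∧
    2 * vc h + (if h.getLast? = some false then 1 else 0) = k}

lemma vc_palin (h : List Bool) :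
    vc (h ++ rc h) = 2 * vc h + (if h.getLast? = some false then 1 else 0) := by
  rw [vc_append, vc_rc]
  have h1 : (rc h).head? = h.getLast?.map (fun b => !b) := by
    simp [rc, List.head?_map, List.head?_reverse]
  rw [h1]
  cases hl : h.getLast? with
  | none => simp [two_mul]
  | some b => cases b <;> simp [two_mul] <;> omega

lemma symm_palin (h : List Bool) : IsSymmetric (h ++ rc h) := by
  simp [IsSymmetric, rc, List.map_reverse, List.map_map, Function.comp_def, Bool.not_not]

lemma mem_S_iff (m k : ℕ) (p : List Bool) :
    (IsDyckPath m p ∧ IsSymmetric p ∧ valleys p = k) ↔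
      ∃ h ∈ halfSet m k, p = h ++ rc h := by
  constructor
  · rintro ⟨⟨hlen, _hcount, hpref⟩, hsym, hval⟩
    set A := p.take m with hA
    set B := p.drop m with hB
    have hAlen : A.length = m := by
      rw [hA, List.length_take, hlen]; omega
    have hBlen : B.length = m := by
      rw [hB, List.length_drop, hlen]; omega
    have hAB : A ++ B = p := List.take_append_drop m p
    have hsym' : (B.reverse.map (fun b => !b)) ++ (A.reverse.map (fun b => !b)) = A ++ B := by
      have := hsym
      rw [IsSymmetric, ← hAB, List.reverse_append, List.map_append] at this
      rw [this, hAB]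
    have hlen2 : (B.reverse.map (fun b => !b)).length = A.length := by
      simp [hAlen, hBlen]
    have hrcB : rc B = A := (List.append_inj hsym' hlen2).1
    have hBrcA : B = rc A := by rw [← hrcB, rc_rc]
    refine ⟨A, ⟨hAlen, ?_, ?_⟩, by rw [← hAB, hBrcA]⟩
    · intro i
      have : A.take i = p.take (min i m) := by
        rw [hA, List.take_take]
      rw [this]
      exact hpref _
    · rw [← vc_palin, ← hBrcA, hAB, ← valleys_eq_vc, hval]
  · rintro ⟨h, ⟨hlen, hc, hv⟩, rfl⟩
    have hrclen : (rc h).length = m := by simp [rc, hlen]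
    have hcount : ∀ l : List Bool, l.count true + l.count false = l.length :=
      List.count_true_add_count_false
    refine ⟨⟨?_, ?_, ?_⟩, symm_palin h, ?_⟩
    · simp [hlen, hrclen]; omega
    · rw [List.count_append, count_rc]
      have := hcount h
      simp only [Bool.not_true] at *
      omega
    · intro i
      rcases le_or_gt i m with hi | hi
      · rw [List.take_append_of_le_length (by rw [hlen]; exact hi)]
        have : h.take i = (h.take i).take i := by rw [List.take_take]; simp
        exact hc i
      · rw [List.take_append, List.take_of_length_le (by omega)]
        set j := i - h.length with hj
        have hs : (rc h).take j = ((h.drop (h.length - j)).reverse).map (fun b => !b) := by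
          rw [rc, ← List.map_take, List.take_reverse]
        have hF : ((rc h).take j).count false = (h.drop (h.length - j)).count true := by
          rw [hs, count_not_map, List.count_reverse]; rfl
        have hT : ((rc h).take j).count true = (h.drop (h.length - j)).count false := by
          rw [hs, count_not_map, List.count_reverse]; rfl
        have hsplit : h.take (h.length - j) ++ h.drop (h.length - j) = h :=
          List.take_append_drop _ _
        have hcF : (h.take (h.length - j)).count false + (h.drop (h.length - j)).count false
            = h.count false := by rw [← List.count_append, hsplit]
        have hcT : (h.take (h.length - j)).count true + (h.drop (h.length - j)).count true
            = h.count true := by rw [← List.count_append, hsplit]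
        have hhc := hc (h.length - j)
        simp only [List.count_append, hF, hT]
        omega
    · rw [valleys_eq_vc, vc_palin, hv]

lemma u_eq (m k : ℕ) : u m k = (halfSet m k).ncard := by
  have hset : {p : List Bool | IsDyckPath m p ∧ IsSymmetric p ∧ valleys p = k} =
      (fun h => h ++ rc h) '' halfSet m k := by
    ext p
    rw [Set.mem_setOf_eq, mem_S_iff]
    constructor
    · rintro ⟨h, hh, rfl⟩; exact ⟨h, hh, rfl⟩
    · rintro ⟨h, hh, rfl⟩; exact ⟨h, hh, rfl⟩
  rw [u, hset, Set.ncard_image_of_injOn]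
  intro h₁ m₁ h₂ m₂ e
  exact (List.append_inj e (by rw [m₁.1, m₂.1])).1

theorem u_odd_recurrence_even_row (n k : ℕ) (hn : 1 ≤ n) :
    u (2 * n) (2 * k + 1) = u (2 * n - 1) (2 * k + 1) + u (2 * n - 1) (2 * k) := by
  rw [u_eq, u_eq, u_eq]
  set G : Set (List Bool) :=
    {g | g.length = 2 * n - 1 ∧ halfCond g ∧ vc g = k} with hGdef
  have hcount : ∀ l : List Bool, l.count true + l.count false = l.length :=
    List.count_true_add_count_false
  have hG : halfSet (2 * n) (2 * k + 1) = (fun g => g ++ [false]) '' G := by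
    ext h
    constructor
    · rintro ⟨hlen, hc, hv⟩
      have hne : h ≠ [] := by
        intro e; rw [e] at hlen; simp at hlen; omega
      have hlast : h.getLast? = some (h.getLast hne) := List.getLast?_eq_getLast hne
      obtain ⟨hlastf, hvk⟩ : h.getLast hne = false ∧ vc h = k := by
        cases hb : h.getLast hne with
        | true =>
          exfalso; rw [hlast, hb] at hv; simp at hv; omega
        | false =>
          refine ⟨rfl, ?_⟩; rw [hlast, hb] at hv; simp at hv; omega
      have hd : h.dropLast ++ [false] = h := by
        conv_rhs => rw [← List.dropLast_append_getLast hne]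
        rw [hlastf]
      refine ⟨h.dropLast, ⟨?_, ?_, ?_⟩, hd⟩
      · rw [List.length_dropLast, hlen]
      · intro i
        have : h.dropLast.take i = h.take (min i (h.length - 1)) := by
          rw [List.dropLast_eq_take, List.take_take]
        rw [this]; exact hc _
      · have := vc_append h.dropLast [false]
        rw [hd] at this
        simp [vc] at this
        omega
    · rintro ⟨g, ⟨hlen, hc, hv⟩, rfl⟩
      have hglen : g.length = 2 * n - 1 := hlen
      refine ⟨?_, ?_, ?_⟩
      · simp [hglen]; omega
      · intro i
        rcases le_or_gt i g.length with hi | hi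
        · rw [List.take_append_of_le_length hi]
          exact hc i
        · rw [List.take_of_length_le (by simp; omega)]
          have h1 := hc g.length
          rw [List.take_of_length_le le_rfl] at h1
          have h2 := hcount g
          simp [List.count_append]
          omega
      · rw [vc_append, List.getLast?_concat]
        simp [vc, hv]
  have hsplit : G = halfSet (2 * n - 1) (2 * k + 1) ∪ halfSet (2 * n - 1) (2 * k) := by
    ext g
    constructor
    · rintro ⟨hlen, hc, hv⟩
      have hne : g ≠ [] := by
        intro e; rw [e] at hlen; simp at hlen; omega
      have hlast : g.getLast? = some (g.getLast hne) := List.getLast?_eq_getLast hne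
      cases hb : g.getLast hne with
      | false =>
        left
        refine ⟨hlen, hc, ?_⟩
        rw [hlast, hb, hv]; simp
      | true =>
        right
        refine ⟨hlen, hc, ?_⟩
        rw [hlast, hb, hv]; simp
    · rintro (⟨hlen, hc, hv⟩ | ⟨hlen, hc, hv⟩) <;>
        refine ⟨hlen, hc, ?_⟩ <;> split_ifs at hv <;> omega
  have hdisj : Disjoint (halfSet (2 * n - 1) (2 * k + 1)) (halfSet (2 * n - 1) (2 * k)) := by
    rw [Set.disjoint_left]
    rintro g ⟨_, _, h1⟩ ⟨_, _, h2⟩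
    omega
  have hfin : ∀ j, (halfSet (2 * n - 1) j).Finite := fun j =>
    (List.finite_length_eq Bool (2 * n - 1)).subset fun x hx => hx.1
  rw [hG, Set.ncard_image_of_injOn (fun g₁ _ g₂ _ e => (List.append_inj' e rfl).1),
    hsplit, Set.ncard_union_eq hdisj (hfin _) (hfin _)]
end

section
/- For all integers n ≥ 1 and k ≥ 0, u(2n+1, 2k+1) = u(2n, 2k+1) + u(2n, 2k) − N(n,k), where N(n,k) = (1/(k+1))·binomial(n,k)·binomial(n-1,k) is the Narayana number. -/
def narayana (n k : ℕ) : ℕ :=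
  n.choose k * (n - 1).choose k / (k + 1)

/- ## List lemmas -/

lemma count_tf (l : List Bool) : l.count true + l.count false = l.length := by
  induction l with
  | nil => simp
  | cons a t ih => cases a <;> simp [List.count_cons] <;> omega

/-- prefix condition -/
def PC (l : List Bool) : Prop := ∀ i, (l.take i).count false ≤ (l.take i).count true

lemma PC_total {l : List Bool} (h : PC l) : l.count false ≤ l.count true := by
  have := h l.length
  simpa using this

lemma PC_append_singleton (l : List Bool) (b : Bool) :
    PC (l ++ [b]) ↔ PC l ∧ (l ++ [b]).count false ≤ (l ++ [b]).count true := by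
  constructor
  · intro h
    have hl : PC l := by
      intro i
      rcases le_or_gt i l.length with hi | hi
      · have := h i
        rwa [List.take_append_of_le_length hi] at this
      · rw [List.take_of_length_le (le_of_lt hi)]
        have := h l.length
        rwa [List.take_append_of_le_length le_rfl, List.take_length] at this
    exact ⟨hl, PC_total h⟩
  · rintro ⟨h1, h2⟩ i
    rcases le_or_gt i l.length with hi | hi
    · rw [List.take_append_of_le_length hi]; exact h1 i
    · rw [List.take_of_length_le (by simp; omega)]
      exact h2

lemma valleys_cons_cons_s3 (a c : Bool) (t : List Bool) :
    valleys (a :: c :: t) = valleys (c :: t) + (if a = false ∧ c = true then 1 else 0) := by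
  have : valleys (a :: c :: t) = List.count (false, true) ((a, c) :: (c :: t).zip t) := rfl
  rw [this, List.count_cons]
  have : valleys (c :: t) = List.count (false, true) ((c :: t).zip t) := rfl
  rw [← this]
  congr 1
  by_cases h : a = false ∧ c = true
  · obtain ⟨ha, hc⟩ := h; subst ha; subst hc; simp
  · have : ¬ ((a, c) = (false, true)) := by
      intro hh; apply h; cases hh; exact ⟨rfl, rfl⟩
    simp [this, h]

lemma valleys_append_singleton (l : List Bool) (b : Bool) (hl : l ≠ []) :
    valleys (l ++ [b]) =
      valleys l + (if l.getLast? = some false ∧ b = true then 1 else 0) := by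
  induction l with
  | nil => simp at hl
  | cons a t ih =>
    cases t with
    | nil =>
      have h1 : ([a] : List Bool) ++ [b] = a :: b :: [] := rfl
      rw [h1, valleys_cons_cons_s3]
      have hv : valleys [a] = 0 := rfl
      have hv2 : valleys [b] = 0 := rfl
      rw [hv2, hv]
      cases a <;> cases b <;> simp
    | cons c t' =>
      have h1 : (a :: c :: t') ++ [b] = a :: ((c :: t') ++ [b]) := rfl
      have h2 : (c :: t') ++ [b] = c :: (t' ++ [b]) := rfl
      rw [h1, h2, valleys_cons_cons_s3, ← h2, ih (by simp), valleys_cons_cons_s3]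
      have h3 : (a :: c :: t').getLast? = (c :: t').getLast? := by
        rw [List.getLast?_cons_cons]
      rw [h3]
      ring

lemma getLast?_append_ne (l r : List Bool) (hr : r ≠ []) :
    (l ++ r).getLast? = r.getLast? := by
  rw [List.getLast?_eq_head?_reverse, List.getLast?_eq_head?_reverse, List.reverse_append]
  obtain ⟨x, s, hxs⟩ := List.exists_cons_of_ne_nil (show r.reverse ≠ [] by simpa using hr)
  rw [hxs]
  rfl

lemma valleys_append_s3 (l r : List Bool) (hl : l ≠ []) (hr : r ≠ []) :
    valleys (l ++ r) = valleys l + valleys r +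
      (if l.getLast? = some false ∧ r.head? = some true then 1 else 0) := by
  induction r using List.reverseRecOn with
  | nil => simp at hr
  | append_singleton r' b ih =>
    cases r' with
    | nil =>
      simp only [List.nil_append]
      rw [valleys_append_singleton l b hl]
      have hv : valleys [b] = 0 := rfl
      cases b <;> simp [hv]
    | cons c t =>
      have hr' : (c :: t) ≠ [] := by simp
      rw [← List.append_assoc]
      rw [valleys_append_singleton (l ++ c :: t) b (by simp)]
      rw [ih hr', valleys_append_singleton (c :: t) b hr']
      have h4 : (l ++ c :: t).getLast? = (c :: t).getLast? :=
        getLast?_append_ne l (c :: t) (by simp)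
      rw [h4]
      have h5 : ((c :: t) ++ [b]).head? = some c := rfl
      have h6 : (c :: t).head? = some c := rfl
      rw [h5, h6]
      ring

lemma count_revnot (l : List Bool) (b : Bool) :
    (l.reverse.map (fun x => !x)).count b = l.count !b := by
  rw [List.count_eq_countP, List.count_eq_countP]
  rw [List.countP_map]
  rw [List.countP_reverse]
  congr 1
  funext x
  cases x <;> cases b <;> rfl

lemma getLast?_revnot (l : List Bool) :
    (l.reverse.map (fun x => !x)).getLast? = l.head?.map (fun x => !x) := by
  cases l with
  | nil => rfl
  | cons a t =>
    rw [List.getLast?_eq_head?_reverse]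
    rw [← List.map_reverse, List.reverse_reverse]
    rw [List.head?_map]

lemma head?_revnot (l : List Bool) :
    (l.reverse.map (fun x => !x)).head? = l.getLast?.map (fun x => !x) := by
  rw [List.head?_map, List.head?_reverse]

lemma valleys_revnot (l : List Bool) :
    valleys (l.reverse.map (fun x => !x)) = valleys l := by
  induction l using List.reverseRecOn with
  | nil => rfl
  | append_singleton t a ih =>
    cases t with
    | nil => rfl
    | cons c t' =>
      rw [List.reverse_append, List.map_append]
      have h1 : ([a] : List Bool).reverse = [a] := rfl
      rw [h1]
      have h2 : ([a].map (fun x : Bool => !x)) = [!a] := rfl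
      rw [h2]
      have h3 : ([!a] : List Bool) ++ (c :: t').reverse.map (fun x => !x)
          = (!a) :: ((c :: t').reverse.map (fun x => !x)) := rfl
      rw [h3]
      have hne : ((c :: t').reverse.map (fun x => !x)) ≠ [] := by simp
      obtain ⟨d, r, hdr⟩ := List.exists_cons_of_ne_nil hne
      rw [hdr, valleys_cons_cons_s3, ← hdr, ih]
      rw [valleys_append_singleton (c :: t') a (by simp)]
      obtain ⟨x, hlast⟩ : ∃ x, (c :: t').getLast? = some x := by
        cases h : (c :: t').getLast? with
        | none => simp [List.getLast?_eq_none_iff] at h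
        | some x => exact ⟨x, rfl⟩
      have hd : d = !x := by
        have hh := head?_revnot (c :: t')
        rw [hdr, hlast] at hh
        simpa using hh
      subst hd
      rw [hlast]
      cases a <;> cases x <;> simp

/- ## Counting sets by number of up/down steps -/

def Nset (p q k : ℕ) (b : Bool) : Set (List Bool) :=
  {l | l.count true = p ∧ l.count false = q ∧ PC l ∧ valleys l = k ∧ l.getLast? = some b}

lemma finite_of_length (S : Set (List Bool)) (m : ℕ) (h : ∀ l ∈ S, l.length = m) :
    S.Finite := by
  apply Set.Finite.subset (List.finite_length_eq Bool m)
  intro l hl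
  exact h l hl

lemma Nset_finite (p q k : ℕ) (b : Bool) : (Nset p q k b).Finite := by
  apply finite_of_length _ (p + q)
  rintro l ⟨h1, h2, -⟩
  rw [← count_tf, h1, h2]

lemma Nset_nonempty_mem {p q k : ℕ} {b : Bool} {l : List Bool} (h : l ∈ Nset p q k b) :
    l ≠ [] := by
  intro hnil
  subst hnil
  simpa using h.2.2.2.2

lemma Nset_empty_of_lt (p q k : ℕ) (b : Bool) (h : p < q) : Nset p q k b = ∅ := by
  ext l
  simp only [Set.mem_empty_iff_false, iff_false]
  rintro ⟨h1, h2, h3, -⟩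
  have := PC_total h3
  omega

/-- decompose a list ending in `b` -/
lemma eq_dropLast_append {l : List Bool} {b : Bool} (h : l.getLast? = some b) :
    l = l.dropLast ++ [b] := by
  have hne : l ≠ [] := by intro hnil; subst hnil; simp at h
  conv_lhs => rw [← List.dropLast_append_getLast hne]
  congr 2
  have := List.getLast?_eq_getLast hne
  rw [this] at h
  exact Option.some_inj.mp h

lemma mem_of_getLast?' {l : List Bool} {b : Bool} (h : l.getLast? = some b) : b ∈ l := by
  rw [eq_dropLast_append h]
  simp

lemma Nset_true_zero (q k : ℕ) : Nset 0 q k true = ∅ := by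
  ext l
  simp only [Set.mem_empty_iff_false, iff_false]
  rintro ⟨h1, h2, h3, h4, h5⟩
  have hm := mem_of_getLast?' h5
  have : l.count true ≠ 0 := by
    intro hh
    exact (List.count_eq_zero.mp hh) hm
  omega

lemma Nset_false_zero (p k : ℕ) : Nset p 0 k false = ∅ := by
  ext l
  simp only [Set.mem_empty_iff_false, iff_false]
  rintro ⟨h1, h2, h3, h4, h5⟩
  have hm := mem_of_getLast?' h5
  have : l.count false ≠ 0 := by
    intro hh
    exact (List.count_eq_zero.mp hh) hm
  omega

lemma mem_Nset_append_true (l : List Bool) (p q k : ℕ) (b : Bool)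
    (hl : l ∈ Nset p q k b) :
    l ++ [true] ∈ Nset (p + 1) q (if b then k else k + 1) true := by
  have hne : l ≠ [] := Nset_nonempty_mem hl
  obtain ⟨h1, h2, h3, h4, h5⟩ := hl
  refine ⟨?_, ?_, ?_, ?_, ?_⟩
  · simp [List.count_append, h1]
  · simp [List.count_append, h2]
  · rw [PC_append_singleton]
    refine ⟨h3, ?_⟩
    have := PC_total h3
    simp [List.count_append, h1, h2]
    omega
  · rw [valleys_append_singleton l true hne, h4, h5]
    cases b <;> simp
  · simp

lemma mem_Nset_append_false (l : List Bool) (p q k : ℕ) (b : Bool)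
    (hl : l ∈ Nset p q k b) (hpq : q + 1 ≤ p) :
    l ++ [false] ∈ Nset p (q + 1) k false := by
  have hne : l ≠ [] := Nset_nonempty_mem hl
  obtain ⟨h1, h2, h3, h4, h5⟩ := hl
  refine ⟨?_, ?_, ?_, ?_, ?_⟩
  · simp [List.count_append, h1]
  · simp [List.count_append, h2]
  · rw [PC_append_singleton]
    refine ⟨h3, ?_⟩
    simp [List.count_append, h1, h2]
    omega
  · rw [valleys_append_singleton l false hne, h4]
    simp
  · simp

/-- recurrence R1a -/
lemma R1a (p q k : ℕ) :
    Nset (p + 1) q (k + 1) true =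
      (fun l => l ++ [true]) '' (Nset p q (k + 1) true ∪ Nset p q k false) := by
  ext l
  constructor
  · intro hl
    obtain ⟨h1, h2, h3, h4, h5⟩ := hl
    have hdec := eq_dropLast_append h5
    set l' := l.dropLast with hl'
    have hc1 : l'.count true = p := by
      have : l.count true = l'.count true + 1 := by
        conv_lhs => rw [hdec]
        simp [List.count_append]
      omega
    have hc2 : l'.count false = q := by
      have : l.count false = l'.count false := by
        conv_lhs => rw [hdec]
        simp [List.count_append]
      omega
    have hpc : PC l' := by
      have := (PC_append_singleton l' true).mp (by rw [← hdec]; exact h3)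
      exact this.1
    have hne' : l' ≠ [] := by
      intro hnil
      rw [hnil] at hdec
      rw [hdec] at h4
      simp [valleys] at h4
    obtain ⟨x, hx⟩ : ∃ x, l'.getLast? = some x := by
      cases h : l'.getLast? with
      | none => simp [List.getLast?_eq_none_iff, hne'] at h
      | some x => exact ⟨x, rfl⟩
    have hv : valleys l = valleys l' + (if x = false then 1 else 0) := by
      conv_lhs => rw [hdec]
      rw [valleys_append_singleton l' true hne', hx]
      cases x <;> simp
    cases x with
    | true =>
      refine ⟨l', Or.inl ⟨hc1, hc2, hpc, ?_, hx⟩, hdec.symm⟩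
      rw [hv] at h4; simp at h4; omega
    | false =>
      refine ⟨l', Or.inr ⟨hc1, hc2, hpc, ?_, hx⟩, hdec.symm⟩
      rw [hv] at h4; simp at h4; omega
  · rintro ⟨l', hl', rfl⟩
    cases hl' with
    | inl h => simpa using mem_Nset_append_true l' p q (k + 1) true h
    | inr h => simpa using mem_Nset_append_true l' p q k false h

/-- recurrence R1b -/
lemma R1b (p q : ℕ) (h : ¬(p = 0 ∧ q = 0)) :
    Nset (p + 1) q 0 true = (fun l => l ++ [true]) '' (Nset p q 0 true) := by
  ext l
  constructor
  · intro hl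
    obtain ⟨h1, h2, h3, h4, h5⟩ := hl
    have hdec := eq_dropLast_append h5
    set l' := l.dropLast with hl'
    have hc1 : l'.count true = p := by
      have : l.count true = l'.count true + 1 := by
        conv_lhs => rw [hdec]; simp [List.count_append]
      omega
    have hc2 : l'.count false = q := by
      have : l.count false = l'.count false := by
        conv_lhs => rw [hdec]; simp [List.count_append]
      omega
    have hpc : PC l' := ((PC_append_singleton l' true).mp (by rw [← hdec]; exact h3)).1
    have hne' : l' ≠ [] := by
      intro hnil
      apply h
      rw [hnil] at hc1 hc2
      simp at hc1 hc2
      exact ⟨hc1.symm, hc2.symm⟩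
    obtain ⟨x, hx⟩ : ∃ x, l'.getLast? = some x := by
      cases hh : l'.getLast? with
      | none => simp [List.getLast?_eq_none_iff, hne'] at hh
      | some x => exact ⟨x, rfl⟩
    have hv : valleys l = valleys l' + (if x = false then 1 else 0) := by
      conv_lhs => rw [hdec]
      rw [valleys_append_singleton l' true hne', hx]
      cases x <;> simp
    cases x with
    | true =>
      refine ⟨l', ⟨hc1, hc2, hpc, ?_, hx⟩, hdec.symm⟩
      simp at hv
      omega
    | false =>
      exfalso
      simp at hv
      omega
  · rintro ⟨l', hl', rfl⟩
    simpa using mem_Nset_append_true l' p q 0 true hl'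

lemma R1c : Nset 1 0 0 true = {[true]} := by
  ext l
  constructor
  · rintro ⟨h1, h2, h3, h4, h5⟩
    have hlen : l.length = 1 := by rw [← count_tf]; omega
    obtain ⟨a, ha⟩ : ∃ a, l = [a] := by
      cases l with
      | nil => simp at hlen
      | cons c t =>
        cases t with
        | nil => exact ⟨c, rfl⟩
        | cons d t' => simp at hlen
    subst ha
    cases a
    · simp at h1
    · rfl
  · rintro rfl
    refine ⟨rfl, rfl, ?_, rfl, rfl⟩
    intro i
    cases i <;> simp

/-- recurrence R2 -/
lemma R2 (p q k : ℕ) (hpq : q + 1 ≤ p) :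
    Nset p (q + 1) k false =
      (fun l => l ++ [false]) '' (Nset p q k true ∪ Nset p q k false) := by
  ext l
  constructor
  · intro hl
    obtain ⟨h1, h2, h3, h4, h5⟩ := hl
    have hdec := eq_dropLast_append h5
    set l' := l.dropLast with hl'
    have hc1 : l'.count true = p := by
      have : l.count true = l'.count true := by
        conv_lhs => rw [hdec]; simp [List.count_append]
      omega
    have hc2 : l'.count false = q := by
      have : l.count false = l'.count false + 1 := by
        conv_lhs => rw [hdec]; simp [List.count_append]
      omega
    have hpc : PC l' := ((PC_append_singleton l' false).mp (by rw [← hdec]; exact h3)).1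
    have hne' : l' ≠ [] := by
      intro hnil
      rw [hnil] at hc1
      simp at hc1
      omega
    obtain ⟨x, hx⟩ : ∃ x, l'.getLast? = some x := by
      cases hh : l'.getLast? with
      | none => simp [List.getLast?_eq_none_iff, hne'] at hh
      | some x => exact ⟨x, rfl⟩
    have hv : valleys l = valleys l' := by
      conv_lhs => rw [hdec]
      rw [valleys_append_singleton l' false hne']
      simp
    cases x with
    | true => exact ⟨l', Or.inl ⟨hc1, hc2, hpc, by omega, hx⟩, hdec.symm⟩
    | false => exact ⟨l', Or.inr ⟨hc1, hc2, hpc, by omega, hx⟩, hdec.symm⟩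
  · rintro ⟨l', hl', rfl⟩
    cases hl' with
    | inl h => exact mem_Nset_append_false l' p q k true h hpq
    | inr h => exact mem_Nset_append_false l' p q k false h hpq

/- ## Cardinalities -/

noncomputable def dU (p q k : ℕ) : ℕ := (Nset p q k true).ncard
noncomputable def dD (p q k : ℕ) : ℕ := (Nset p q k false).ncard

lemma append_inj (b : Bool) : Function.Injective (fun l : List Bool => l ++ [b]) := by
  intro x y h
  simpa using h

lemma ncard_img_union (p q k k' : ℕ) (b : Bool) :
    ((fun l => l ++ [b]) '' (Nset p q k true ∪ Nset p q k' false)).ncard =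
      dU p q k + dD p q k' := by
  rw [Set.ncard_image_of_injective _ (append_inj b)]
  rw [Set.ncard_union_eq ?dis (Nset_finite p q k true) (Nset_finite p q k' false)]
  · rfl
  case dis =>
    rw [Set.disjoint_left]
    rintro l ⟨-, -, -, -, h5⟩ ⟨-, -, -, -, h5'⟩
    rw [h5] at h5'
    simp at h5'

lemma cU1 (p q k : ℕ) : dU (p + 1) q (k + 1) = dU p q (k + 1) + dD p q k := by
  rw [dU, R1a, ncard_img_union]

lemma cU2 (p q : ℕ) (h : ¬(p = 0 ∧ q = 0)) : dU (p + 1) q 0 = dU p q 0 := by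
  rw [dU, R1b p q h, Set.ncard_image_of_injective _ (append_inj true)]
  rfl

lemma cU3 : dU 1 0 0 = 1 := by
  rw [dU, R1c]
  simp

lemma cD (p q k : ℕ) (h : q + 1 ≤ p) : dD p (q + 1) k = dU p q k + dD p q k := by
  rw [dD, R2 p q k h, ncard_img_union]

lemma dU_lt (p q k : ℕ) (h : p < q) : dU p q k = 0 := by
  rw [dU, Nset_empty_of_lt p q k true h]; simp

lemma dD_lt (p q k : ℕ) (h : p < q) : dD p q k = 0 := by
  rw [dD, Nset_empty_of_lt p q k false h]; simp

lemma dU_zero (q k : ℕ) : dU 0 q k = 0 := by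
  rw [dU, Nset_true_zero]; simp

lemma dD_zero (p k : ℕ) : dD p 0 k = 0 := by
  rw [dD, Nset_false_zero]; simp

/- ## The closed forms -/

/-- binomial coefficient with integer arguments, zero outside the natural range -/
def cch (n j : ℤ) : ℤ := if 0 ≤ n ∧ 0 ≤ j then (n.toNat.choose j.toNat : ℤ) else 0

lemma cch_neg_left {n j : ℤ} (h : n < 0) : cch n j = 0 := by
  rw [cch, if_neg]; omega

lemma cch_neg_right {n j : ℤ} (h : j < 0) : cch n j = 0 := by
  rw [cch, if_neg]; omega

lemma cch_nat (a b : ℕ) : cch (a : ℤ) (b : ℤ) = (a.choose b : ℤ) := by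
  rw [cch, if_pos (by omega)]
  simp

lemma cch_zero_right {n : ℤ} (h : 0 ≤ n) : cch n 0 = 1 := by
  rw [cch, if_pos (by omega)]
  simp

lemma cch_pascal (n j : ℤ) (hn : 0 ≤ n) : cch (n + 1) j = cch n j + cch n (j - 1) := by
  rcases lt_trichotomy j 0 with hj | hj | hj
  · rw [cch_neg_right hj, cch_neg_right hj, cch_neg_right (by omega)]
    ring
  · subst hj
    rw [cch_zero_right (by omega), cch_zero_right hn, cch_neg_right (by omega)]
    ring
  · rw [cch, cch, cch, if_pos (by omega), if_pos (by omega), if_pos (by omega)]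
    have h1 : (n + 1).toNat = n.toNat + 1 := by omega
    have h2 : j.toNat = (j - 1).toNat + 1 := by omega
    rw [h1, h2, Nat.choose_succ_succ]
    push_cast
    ring

/-- closed form for counts of nonneg paths ending with an up-step -/
def fU (p q k : ℕ) : ℤ :=
  (if p ≠ 0 ∧ q = 0 ∧ k = 0 then 1 else 0) +
    cch ((p : ℤ) - 1) (k : ℤ) * cch ((q : ℤ) - 1) ((k : ℤ) - 1) -
    cch ((p : ℤ) - 1) ((k : ℤ) - 1) * cch ((q : ℤ) - 1) (k : ℤ)

/-- closed form for counts of nonneg paths ending with a down-step -/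
def fD (p q k : ℕ) : ℤ :=
  cch ((p : ℤ) - 1) (k : ℤ) * cch ((q : ℤ) - 1) (k : ℤ) -
    cch ((p : ℤ) - 1) ((k : ℤ) - 1) * cch ((q : ℤ) - 1) ((k : ℤ) + 1)

lemma fU_k0 (p q : ℕ) : fU p q 0 = if p ≠ 0 ∧ q = 0 then 1 else 0 := by
  rw [fU]
  rw [cch_neg_right (show ((0:ℕ) : ℤ) - 1 < 0 by norm_num)]
  rw [cch_neg_right (show ((0:ℕ) : ℤ) - 1 < 0 by norm_num)]
  by_cases h : p ≠ 0 ∧ q = 0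
  · rw [if_pos ⟨h.1, h.2, rfl⟩, if_pos h]; ring
  · rw [if_neg (by tauto), if_neg h]; ring

lemma fD_q0 (p k : ℕ) : fD p 0 k = 0 := by
  rw [fD]
  rw [cch_neg_left (show ((0:ℕ) : ℤ) - 1 < 0 by norm_num)]
  rw [cch_neg_left (show ((0:ℕ) : ℤ) - 1 < 0 by norm_num)]
  ring

lemma fU_diag (p k : ℕ) (hp : p ≠ 0) : fU p p k = 0 := by
  rw [fU, if_neg (by tauto)]
  ring

lemma fU_p0 (k : ℕ) : fU 0 0 k = 0 := by
  have h0 : ((0:ℕ) : ℤ) - 1 < 0 := by norm_num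
  rw [fU, if_neg (by tauto), cch_neg_left h0, cch_neg_left h0]
  ring

lemma fU_10 (k : ℕ) : fU 1 0 k = if k = 0 then 1 else 0 := by
  have h0 : ((0:ℕ) : ℤ) - 1 < 0 := by norm_num
  by_cases h : k = 0
  · subst h
    have e : ((1:ℕ) ≠ 0 ∧ (0:ℕ) = 0 ∧ (0:ℕ) = 0) := ⟨by omega, rfl, rfl⟩
    rw [fU, cch_neg_left h0, cch_neg_left h0, if_pos e, if_pos rfl]
    ring
  · rw [fU, cch_neg_left h0, cch_neg_left h0, if_neg (by tauto), if_neg h]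
    ring

/-- Identity (I) -/
lemma identity_I (p q k : ℕ) (hp : 1 ≤ p) :
    fU (p + 1) q (k + 1) = fU p q (k + 1) + fD p q k := by
  have hp' : (0:ℤ) ≤ (p:ℤ) - 1 := by
    have : (1:ℤ) ≤ (p:ℤ) := by exact_mod_cast hp
    omega
  simp only [fU, fD]
  rw [if_neg (by simp), if_neg (by simp)]
  push_cast
  rw [show ((p:ℤ) + 1) - 1 = ((p:ℤ) - 1) + 1 by ring]
  rw [show ((k:ℤ) + 1) - 1 = (k:ℤ) by ring]
  rw [cch_pascal ((p:ℤ) - 1) ((k:ℤ) + 1) hp', cch_pascal ((p:ℤ) - 1) ((k:ℤ)) hp']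
  rw [show ((k:ℤ) + 1) - 1 = (k:ℤ) by ring]
  ring

/-- Identity (II) -/
lemma identity_II (p q k : ℕ) (hq : 1 ≤ q) :
    fD p (q + 1) k = fU p q k + fD p q k := by
  have hq' : (0:ℤ) ≤ (q:ℤ) - 1 := by
    have : (1:ℤ) ≤ (q:ℤ) := by exact_mod_cast hq
    omega
  simp only [fU, fD]
  rw [if_neg (by omega)]
  push_cast
  rw [show ((q:ℤ) + 1) - 1 = ((q:ℤ) - 1) + 1 by ring]
  rw [cch_pascal ((q:ℤ) - 1) ((k:ℤ)) hq', cch_pascal ((q:ℤ) - 1) ((k:ℤ) + 1) hq']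
  rw [show ((k:ℤ) + 1) - 1 = (k:ℤ) by ring]
  ring

/-- Identity (II), base case q = 0 -/
lemma identity_II_q0 (p k : ℕ) (hp : 1 ≤ p) :
    fD p 1 k = fU p 0 k + fD p 0 k := by
  rw [fD_q0, fU]
  rw [cch_neg_left (show ((0:ℕ) : ℤ) - 1 < 0 by norm_num)]
  rw [cch_neg_left (show ((0:ℕ) : ℤ) - 1 < 0 by norm_num)]
  rw [fD]
  have h1 : ((1:ℕ) : ℤ) - 1 = 0 := by norm_num
  rw [h1]
  have hp' : (0:ℤ) ≤ (p:ℤ) - 1 := by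
    have : (1:ℤ) ≤ (p:ℤ) := by exact_mod_cast hp
    omega
  by_cases h : k = 0
  · subst h
    simp only [Nat.cast_zero]
    rw [cch_zero_right hp', cch_zero_right (le_refl (0:ℤ))]
    rw [cch_neg_right (show (0:ℤ) - 1 < 0 by norm_num)]
    have hcc : cch 0 ((0:ℤ) + 1) = 0 := by
      rw [cch, if_pos (by norm_num)]
      norm_num
    rw [hcc]
    have hpne : p ≠ 0 := by omega
    simp [hpne]
  · rw [if_neg (by tauto)]
    have h2 : cch 0 (k : ℤ) = 0 := by
      rw [cch, if_pos (by omega)]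
      rw [Nat.choose_eq_zero_of_lt (by omega)]
      rfl
    have h3 : cch 0 ((k : ℤ) + 1) = 0 := by
      rw [cch, if_pos (by omega)]
      rw [Nat.choose_eq_zero_of_lt (by omega)]
      rfl
    rw [h2, h3]
    ring

/- ## The main induction -/

theorem dUdD_eq (s : ℕ) : ∀ p q k : ℕ, p + q = s → q ≤ p →
    ((dU p q k : ℤ) = fU p q k ∧ (dD p q k : ℤ) = fD p q k) := by
  induction s using Nat.strong_induction_on with
  | _ s ih =>
    intro p q k hs hqp
    constructor
    · -- dU part
      cases p with
      | zero =>
        have hq : q = 0 := by omega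
        subst hq
        rw [dU_zero, fU_p0]
        simp
      | succ p' =>
        rcases Nat.lt_or_ge p' q with hlt | hge
        · -- q = p' + 1
          have hq : q = p' + 1 := by omega
          subst hq
          cases k with
          | zero =>
            rw [cU2 p' (p' + 1) (by omega), dU_lt p' (p' + 1) 0 (by omega),
              fU_diag (p' + 1) 0 (by omega)]
            simp
          | succ k' =>
            rw [cU1 p' (p' + 1) k', dU_lt p' (p' + 1) (k' + 1) (by omega),
              dD_lt p' (p' + 1) k' (by omega), fU_diag (p' + 1) (k' + 1) (by omega)]
            simp
        · -- q ≤ p'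
          cases k with
          | zero =>
            by_cases h00 : p' = 0 ∧ q = 0
            · obtain ⟨rfl, rfl⟩ := h00
              rw [cU3, fU_10]
              simp
            · rw [cU2 p' q h00]
              rw [(ih (p' + q) (by omega) p' q 0 rfl hge).1]
              rw [fU_k0, fU_k0]
              by_cases hq : q = 0
              · subst hq
                have hne : p' ≠ 0 := by tauto
                have e1 : (p' ≠ 0 ∧ (0:ℕ) = 0) := ⟨hne, rfl⟩
                have e2 : (p' + 1 ≠ 0 ∧ (0:ℕ) = 0) := ⟨by omega, rfl⟩
                rw [if_pos e1, if_pos e2]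
              · rw [if_neg (by tauto), if_neg (by tauto)]
          | succ k' =>
            rw [cU1 p' q k']
            push_cast
            rw [(ih (p' + q) (by omega) p' q (k' + 1) rfl hge).1,
              (ih (p' + q) (by omega) p' q k' rfl hge).2]
            rcases Nat.lt_or_ge p' 1 with hp1 | hp1
            · have hp0 : p' = 0 := by omega
              subst hp0
              have hq0 : q = 0 := by omega
              subst hq0
              have hdefeq : fU (0 + 1) 0 (k' + 1) = fU 1 0 (k' + 1) := rfl
              rw [fU_p0, fD_q0, hdefeq, fU_10, if_neg (by omega)]
              ring
            · rw [identity_I p' q k' hp1]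
    · -- dD part
      cases q with
      | zero =>
        rw [dD_zero, fD_q0]
        simp
      | succ q' =>
        rw [cD p q' k hqp]
        push_cast
        rw [(ih (p + q') (by omega) p q' k rfl (by omega)).1,
          (ih (p + q') (by omega) p q' k rfl (by omega)).2]
        rcases Nat.lt_or_ge q' 1 with hq1 | hq1
        · have hq0 : q' = 0 := by omega
          subst hq0
          exact (identity_II_q0 p k (by omega)).symm
        · exact (identity_II p q' k hq1).symm

/- ## Narayana -/

lemma narayana_core (n k : ℕ) (hn : 1 ≤ n) :
    ((k : ℤ) + 1) * fD n n k = (n.choose k : ℤ) * ((n - 1).choose k : ℤ) := by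
  obtain ⟨m, rfl⟩ : ∃ m, n = m + 1 := ⟨n - 1, by omega⟩
  have hm : ((m + 1 : ℕ) : ℤ) - 1 = (m : ℤ) := by push_cast; ring
  have hsub : (m + 1 : ℕ) - 1 = m := by omega
  rw [fD, hm, hsub]
  rcases Nat.lt_or_ge m k with hmk | hkm
  · -- k > m : both sides zero
    have c1 : cch (m : ℤ) (k : ℤ) = 0 := by
      rw [cch_nat, Nat.choose_eq_zero_of_lt hmk]; rfl
    have c2 : cch (m : ℤ) ((k : ℤ) + 1) = 0 := by
      rw [show ((k:ℤ) + 1) = ((k + 1 : ℕ) : ℤ) by push_cast; ring]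
      rw [cch_nat, Nat.choose_eq_zero_of_lt (by omega)]; rfl
    have c3 : ((m + 1).choose k : ℤ) * (m.choose k : ℤ) = 0 := by
      rw [Nat.choose_eq_zero_of_lt hmk]; ring
    rw [c1, c2, c3]
    ring
  · -- k ≤ m
    cases k with
    | zero =>
      simp only [Nat.cast_zero]
      rw [cch_zero_right (by positivity)]
      rw [cch_neg_right (show (0 : ℤ) - 1 < 0 by norm_num)]
      simp
    | succ k' =>
      have hk : k' + 1 ≤ m := hkm
      have c1 : cch (m : ℤ) ((k' + 1 : ℕ) : ℤ) = (m.choose (k' + 1) : ℤ) := cch_nat m (k' + 1)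
      have c2 : cch (m : ℤ) (((k' + 1 : ℕ) : ℤ) - 1) = (m.choose k' : ℤ) := by
        rw [show (((k' + 1 : ℕ) : ℤ) - 1) = ((k' : ℕ) : ℤ) by push_cast; ring]
        exact cch_nat m k'
      have c3 : cch (m : ℤ) (((k' + 1 : ℕ) : ℤ) + 1) = (m.choose (k' + 2) : ℤ) := by
        rw [show (((k' + 1 : ℕ) : ℤ) + 1) = ((k' + 2 : ℕ) : ℤ) by push_cast; ring]
        exact cch_nat m (k' + 2)
      rw [c1, c2, c3]
      have e1 : (m.choose (k' + 2) : ℤ) * ((k' : ℤ) + 2) =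
          (m.choose (k' + 1) : ℤ) * ((m : ℤ) - (k' + 1)) := by
        have h := Nat.choose_succ_right_eq m (k' + 1)
        zify [hk] at h
        linarith [h]
      have e2 : (m.choose (k' + 1) : ℤ) * ((k' : ℤ) + 1) =
          (m.choose k' : ℤ) * ((m : ℤ) - k') := by
        have h := Nat.choose_succ_right_eq m k'
        zify [show k' ≤ m by omega] at h
        linarith [h]
      have e3 : ((m + 1).choose (k' + 1) : ℤ) = (m.choose k' : ℤ) + (m.choose (k' + 1) : ℤ) := by
        rw [Nat.choose_succ_succ]
        push_cast
        ring
      push_cast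
      linear_combination (-(m.choose k' : ℤ)) * e1 + (m.choose (k' + 1) : ℤ) * e2 +
        (-(m.choose (k' + 1) : ℤ)) * e3

lemma dD_eq_narayana (n k : ℕ) (hn : 1 ≤ n) : dD n n k = narayana n k := by
  have h := (dUdD_eq (n + n) n n k rfl le_rfl).2
  have hcore := narayana_core n k hn
  have hN : (k + 1) * dD n n k = n.choose k * (n - 1).choose k := by
    have : (((k + 1) * dD n n k : ℕ) : ℤ) = ((n.choose k * (n - 1).choose k : ℕ) : ℤ) := by
      push_cast
      rw [h]
      linarith [hcore]
    exact_mod_cast this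
  rw [narayana, ← hN, Nat.mul_div_cancel_left _ (by omega)]

/- ## From symmetric Dyck paths to half-paths -/

def SymSet (m j : ℕ) : Set (List Bool) :=
  {p : List Bool | IsDyckPath m p ∧ IsSymmetric p ∧ valleys p = j}

def HalfSet (m k : ℕ) (b : Bool) : Set (List Bool) :=
  {l | l.length = m ∧ PC l ∧ valleys l = k ∧ l.getLast? = some b}

def ψ (l : List Bool) : List Bool := l ++ (l.reverse.map (fun x => !x))

lemma revnot_revnot (l : List Bool) :
    ((l.reverse.map (fun x => !x)).reverse.map (fun x => !x)) = l := by
  rw [← List.map_reverse, List.reverse_reverse, List.map_map]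
  have hcomp : ((fun x => !x) ∘ (fun x => !x) : Bool → Bool) = id := by
    funext x
    simp
  rw [hcomp, List.map_id]

lemma psi_symmetric (l : List Bool) : IsSymmetric (ψ l) := by
  show (ψ l).reverse.map (fun b => !b) = ψ l
  rw [ψ, List.reverse_append, List.map_append, revnot_revnot]

lemma psi_take (l : List Bool) : (ψ l).take l.length = l := List.take_left

lemma psi_length (l : List Bool) : (ψ l).length = 2 * l.length := by
  simp [ψ]
  ring

lemma psi_count_true (l : List Bool) : (ψ l).count true = l.length := by
  rw [ψ, List.count_append, count_revnot]
  simpa using count_tf l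

lemma count_take_add_drop (b : Bool) (l : List Bool) (s : ℕ) :
    (l.take s).count b + (l.drop s).count b = l.count b := by
  rw [← List.count_append, List.take_append_drop]

lemma rev_take (l : List Bool) (j : ℕ) (hj : j ≤ l.length) :
    l.reverse.take j = (l.drop (l.length - j)).reverse := by
  have h1 : l.reverse = (l.drop (l.length - j)).reverse ++ (l.take (l.length - j)).reverse := by
    rw [← List.reverse_append, List.take_append_drop]
  rw [h1]
  rw [List.take_append_of_le_length (by simp; omega)]
  rw [List.take_of_length_le (by simp; omega)]

lemma count_take_revnot (l : List Bool) (j : ℕ) (hj : j ≤ l.length) (b : Bool) :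
    ((l.reverse.map (fun x => !x)).take j).count b = (l.drop (l.length - j)).count !b := by
  rw [← List.map_take, rev_take l j hj]
  exact count_revnot _ b

lemma psi_PC {l : List Bool} (h : PC l) : PC (ψ l) := by
  intro i
  rcases le_or_gt i l.length with hi | hi
  · rw [ψ, List.take_append_of_le_length hi]
    exact h i
  · rcases le_or_gt (2 * l.length) i with h2 | h2
    · rw [List.take_of_length_le (by rw [psi_length]; omega)]
      rw [ψ, List.count_append, List.count_append, count_revnot, count_revnot]
      simp
      try omega
    · -- l.length < i < 2 * l.length
      have hlen2 : (l.reverse.map (fun x => !x)).length = l.length := by simp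
      rw [ψ, List.take_append]
      rw [List.take_of_length_le (by omega)]
      set j := i - l.length with hjdef
      have hj : j ≤ l.length := by omega
      rw [List.count_append, List.count_append]
      rw [count_take_revnot l j hj, count_take_revnot l j hj]
      set s := l.length - j with hsdef
      have e1 := count_take_add_drop true l s
      have e2 := count_take_add_drop false l s
      have e3 := h s
      simp only [Bool.not_true, Bool.not_false]
      omega

lemma psi_valleys {l : List Bool} {b : Bool} (hne : l ≠ []) (hlast : l.getLast? = some b) :
    valleys (ψ l) = 2 * valleys l + (if b = false then 1 else 0) := by
  have hBne : (l.reverse.map (fun x => !x)) ≠ [] := by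
    simp [hne]
  rw [ψ, valleys_append_s3 l _ hne hBne, valleys_revnot]
  rw [head?_revnot, hlast]
  cases b <;> simp <;> try ring

lemma sym_decomp {p : List Bool} {m : ℕ} (hlen : p.length = 2 * m) (hsym : IsSymmetric p) :
    p = ψ (p.take m) := by
  have hd : p.drop m = (p.take m).reverse.map (fun x => !x) := by
    have h2 : p.reverse = (p.drop m).reverse ++ (p.take m).reverse := by
      rw [← List.reverse_append, List.take_append_drop]
    have h3 : p.reverse.drop m = (p.take m).reverse := by
      rw [h2, List.drop_append_of_le_length (by simp; omega)]
      rw [List.drop_of_length_le (by simp; omega)]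
      simp
    conv_lhs => rw [← hsym]
    rw [← List.map_drop, h3]
  rw [ψ, ← hd, List.take_append_drop]

lemma E1 (m k : ℕ) (hm : 1 ≤ m) (b : Bool) :
    SymSet m (2 * k + (if b = false then 1 else 0)) = ψ '' HalfSet m k b := by
  ext p
  constructor
  · rintro ⟨⟨hlen, hcnt, hpc⟩, hsym, hval⟩
    set A := p.take m with hA
    have hup : p = ψ A := sym_decomp hlen hsym
    have hAlen : A.length = m := by
      rw [hA, List.length_take, hlen]
      omega
    have hAne : A ≠ [] := by
      intro hnil
      rw [hnil] at hAlen
      simp at hAlen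
      omega
    obtain ⟨x, hx⟩ : ∃ x, A.getLast? = some x := by
      cases hh : A.getLast? with
      | none => simp [List.getLast?_eq_none_iff, hAne] at hh
      | some x => exact ⟨x, rfl⟩
    have hv : valleys p = 2 * valleys A + (if x = false then 1 else 0) := by
      conv_lhs => rw [hup]
      exact psi_valleys hAne hx
    have hxb : x = b ∧ valleys A = k := by
      rw [hval] at hv
      cases x <;> cases b <;> simp at hv ⊢ <;> omega
    refine ⟨A, ⟨hAlen, ?_, hxb.2, by rw [hx, hxb.1]⟩, hup.symm⟩
    intro i
    rw [hA, List.take_take]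
    exact hpc (min i m)
  · rintro ⟨l, ⟨hlen, hpc, hval, hlast⟩, rfl⟩
    have hne : l ≠ [] := by
      intro hnil
      rw [hnil] at hlen
      simp at hlen
      omega
    refine ⟨⟨?_, ?_, psi_PC hpc⟩, psi_symmetric l, ?_⟩
    · rw [psi_length, hlen]
    · rw [psi_count_true, hlen]
    · rw [psi_valleys hne hlast, hval]

lemma HalfSet_finite (m k : ℕ) (b : Bool) : (HalfSet m k b).Finite :=
  finite_of_length _ m (fun l hl => hl.1)

lemma u_half (m k : ℕ) (hm : 1 ≤ m) (b : Bool) :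
    u m (2 * k + (if b = false then 1 else 0)) = (HalfSet m k b).ncard := by
  have : u m (2 * k + (if b = false then 1 else 0)) =
      (SymSet m (2 * k + (if b = false then 1 else 0))).ncard := rfl
  rw [this, E1 m k hm b]
  apply Set.ncard_image_of_injOn
  intro x hx y hy hxy
  have h1 : (ψ x).take m = x := by
    rw [← hx.1]; exact psi_take x
  have h2 : (ψ y).take m = y := by
    rw [← hy.1]; exact psi_take y
  rw [← h1, ← h2, hxy]

lemma u_odd_half (m k : ℕ) (hm : 1 ≤ m) : u m (2 * k + 1) = (HalfSet m k false).ncard := by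
  have := u_half m k hm false
  simpa using this

lemma u_even_half (m k : ℕ) (hm : 1 ≤ m) : u m (2 * k) = (HalfSet m k true).ncard := by
  have := u_half m k hm true
  simpa using this

/- ## The sets of half-paths of odd and even length -/

def Gset (n k : ℕ) : Set (List Bool) :=
  {l | l.length = 2 * n ∧ PC l ∧ valleys l = k ∧ l.count false < l.count true}

def Tset (n k : ℕ) : Set (List Bool) :=
  {l | l.length = 2 * n ∧ PC l ∧ valleys l = k}

def Zset (n k : ℕ) : Set (List Bool) :=
  {l | l.length = 2 * n ∧ PC l ∧ valleys l = k ∧ l.count false = l.count true}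

lemma E3 (n k : ℕ) (hn : 1 ≤ n) :
    HalfSet (2 * n + 1) k false = (fun l => l ++ [false]) '' Gset n k := by
  ext l
  constructor
  · rintro ⟨hlen, hpc, hval, hlast⟩
    have hdec := eq_dropLast_append hlast
    set l' := l.dropLast with hl'
    have hlen' : l'.length = 2 * n := by
      have : l.length = l'.length + 1 := by
        conv_lhs => rw [hdec]
        simp
      omega
    have hne' : l' ≠ [] := by
      intro hnil
      rw [hnil] at hlen'
      simp at hlen'
      omega
    have hpc' : PC l' := ((PC_append_singleton l' false).mp (by rw [← hdec]; exact hpc)).1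
    have hcnt : (l' ++ [false]).count false ≤ (l' ++ [false]).count true :=
      ((PC_append_singleton l' false).mp (by rw [← hdec]; exact hpc)).2
    have hval' : valleys l' = k := by
      rw [hdec, valleys_append_singleton l' false hne'] at hval
      simpa using hval
    refine ⟨l', ⟨hlen', hpc', hval', ?_⟩, hdec.symm⟩
    simp [List.count_append] at hcnt
    omega
  · rintro ⟨l', ⟨hlen', hpc', hval', hcnt'⟩, rfl⟩
    have hne' : l' ≠ [] := by
      intro hnil
      rw [hnil] at hlen'
      simp at hlen'
      omega
    refine ⟨by simp [hlen'], ?_, ?_, by simp⟩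
    · rw [PC_append_singleton]
      refine ⟨hpc', ?_⟩
      simp [List.count_append]
      omega
    · rw [valleys_append_singleton l' false hne', hval']
      simp

lemma Tset_eq_G_union_Z (n k : ℕ) : Tset n k = Gset n k ∪ Zset n k := by
  ext l
  constructor
  · rintro ⟨h1, h2, h3⟩
    have := PC_total h2
    rcases lt_or_eq_of_le this with h | h
    · exact Or.inl ⟨h1, h2, h3, h⟩
    · exact Or.inr ⟨h1, h2, h3, h⟩
  · rintro (⟨h1, h2, h3, h4⟩ | ⟨h1, h2, h3, h4⟩) <;> exact ⟨h1, h2, h3⟩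

lemma Tset_eq_H_union_H (n k : ℕ) (hn : 1 ≤ n) :
    Tset n k = HalfSet (2 * n) k false ∪ HalfSet (2 * n) k true := by
  ext l
  constructor
  · rintro ⟨h1, h2, h3⟩
    have hne : l ≠ [] := by
      intro hnil
      rw [hnil] at h1
      simp at h1
      omega
    obtain ⟨x, hx⟩ : ∃ x, l.getLast? = some x := by
      cases hh : l.getLast? with
      | none => simp [List.getLast?_eq_none_iff, hne] at hh
      | some x => exact ⟨x, rfl⟩
    cases x with
    | false => exact Or.inl ⟨h1, h2, h3, hx⟩
    | true => exact Or.inr ⟨h1, h2, h3, hx⟩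
  · rintro (⟨h1, h2, h3, -⟩ | ⟨h1, h2, h3, -⟩) <;> exact ⟨h1, h2, h3⟩

lemma Zset_eq_Nset (n k : ℕ) (hn : 1 ≤ n) : Zset n k = Nset n n k false := by
  ext l
  constructor
  · rintro ⟨h1, h2, h3, h4⟩
    have hct := count_tf l
    have hcf : l.count false = n := by omega
    have hctr : l.count true = n := by omega
    have hne : l ≠ [] := by
      intro hnil
      rw [hnil] at h1
      simp at h1
      omega
    obtain ⟨x, hx⟩ : ∃ x, l.getLast? = some x := by
      cases hh : l.getLast? with
      | none => simp [List.getLast?_eq_none_iff, hne] at hh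
      | some x => exact ⟨x, rfl⟩
    cases x with
    | false => exact ⟨hctr, hcf, h2, h3, hx⟩
    | true =>
      exfalso
      have hdec := eq_dropLast_append hx
      set l' := l.dropLast with hl'
      have hpc' : PC l' := ((PC_append_singleton l' true).mp (by rw [← hdec]; exact h2)).1
      have hc1 : l'.count true + 1 = n := by
        have : l.count true = l'.count true + 1 := by
          conv_lhs => rw [hdec]; simp [List.count_append]
        omega
      have hc2 : l'.count false = n := by
        have : l.count false = l'.count false := by
          conv_lhs => rw [hdec]; simp [List.count_append]
        omega
      have := PC_total hpc'
      omega
  · rintro ⟨h1, h2, h3, h4, h5⟩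
    have hct := count_tf l
    refine ⟨by omega, h3, h4, by omega⟩

/- ## Assembly -/

lemma key_nat (n k : ℕ) (hn : 1 ≤ n) :
    u (2 * n + 1) (2 * k + 1) + narayana n k = u (2 * n) (2 * k + 1) + u (2 * n) (2 * k) := by
  have hGfin : (Gset n k).Finite := finite_of_length _ (2 * n) (fun l hl => hl.1)
  have hZfin : (Zset n k).Finite := finite_of_length _ (2 * n) (fun l hl => hl.1)
  have h1 : u (2 * n + 1) (2 * k + 1) = (Gset n k).ncard := by
    rw [u_odd_half (2 * n + 1) k (by omega), E3 n k hn,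
      Set.ncard_image_of_injective _ (append_inj false)]
  have h2 : (Tset n k).ncard = (Gset n k).ncard + (Zset n k).ncard := by
    rw [Tset_eq_G_union_Z, Set.ncard_union_eq ?dis hGfin hZfin]
    case dis =>
      rw [Set.disjoint_left]
      rintro l ⟨-, -, -, h4⟩ ⟨-, -, -, h4'⟩
      omega
  have h3 : (Tset n k).ncard = (HalfSet (2 * n) k false).ncard + (HalfSet (2 * n) k true).ncard := by
    rw [Tset_eq_H_union_H n k hn,
      Set.ncard_union_eq ?dis (HalfSet_finite _ _ _) (HalfSet_finite _ _ _)]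
    case dis =>
      rw [Set.disjoint_left]
      rintro l ⟨-, -, -, h4⟩ ⟨-, -, -, h4'⟩
      rw [h4] at h4'
      simp at h4'
  have h4 : (Zset n k).ncard = narayana n k := by
    rw [Zset_eq_Nset n k hn]
    have : (Nset n n k false).ncard = dD n n k := rfl
    rw [this, dD_eq_narayana n k hn]
  have h5 : u (2 * n) (2 * k + 1) = (HalfSet (2 * n) k false).ncard :=
    u_odd_half (2 * n) k (by omega)
  have h6 : u (2 * n) (2 * k) = (HalfSet (2 * n) k true).ncard :=
    u_even_half (2 * n) k (by omega)
  omega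

theorem u_odd_recurrence_odd_row (n k : ℕ) (hn : 1 ≤ n) :
    (u (2 * n + 1) (2 * k + 1) : ℤ) =
      u (2 * n) (2 * k + 1) + u (2 * n) (2 * k) - narayana n k := by
  have := key_nat n k hn
  omega
end

section
/- For every integer n ≥ 0, the total number of symmetric Dyck paths of semi-length n equals binomial(n, ⌊n/2⌋). -/
namespace SDyckAux

lemma count_add_count (l : List Bool) : l.count true + l.count false = l.length := by
  induction l with
  | nil => simp
  | cons b t ih => cases b <;> simp [List.count_cons] <;> omega

lemma count_true_map_not (l : List Bool) :
    (l.map (fun b => !b)).count true = l.count false := by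
  have := List.count_map_of_injective l (fun b => !b) (by decide) false
  simpa using this

lemma count_false_map_not (l : List Bool) :
    (l.map (fun b => !b)).count false = l.count true := by
  have := List.count_map_of_injective l (fun b => !b) (by decide) true
  simpa using this

/-- Boolean check that every prefix has `#false ≤ #true + m`. -/
def bal : ℕ → List Bool → Bool
  | _, [] => true
  | m, true :: r => bal (m+1) r
  | 0, false :: _ => false
  | m+1, false :: r => bal m r

lemma bal_iff (p : List Bool) : ∀ (m : ℕ), bal m p = true ↔
    ∀ i, (p.take i).count false ≤ (p.take i).count true + m := by
  induction p with
  | nil => intro m; simp [bal]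
  | cons b r ih =>
    intro m
    cases b
    · cases m with
      | zero =>
        constructor
        · intro h
          rw [show bal 0 (false :: r) = false from rfl] at h
          exact absurd h (by simp)
        · intro h
          have := h 1
          simp [List.count_cons] at this
      | succ m =>
        rw [show bal (m+1) (false :: r) = bal m r from rfl, ih m]
        constructor
        · intro h i
          cases i with
          | zero => simp
          | succ i =>
            have := h i
            simp [List.take_succ_cons, List.count_cons]
            omega
        · intro h i
          have := h (i+1)
          simp [List.take_succ_cons, List.count_cons] at this
          omega
    · rw [show bal m (true :: r) = bal (m+1) r by cases m <;> rfl, ih (m+1)]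
      constructor
      · intro h i
        cases i with
        | zero => simp
        | succ i =>
          have := h i
          simp [List.take_succ_cons, List.count_cons]
          omega
      · intro h i
        have := h (i+1)
        simp [List.take_succ_cons, List.count_cons] at this
        omega

/-- All boolean lists of length `n`. -/
def allW : ℕ → Finset (List Bool)
  | 0 => {[]}
  | n+1 => ((allW n).image (List.cons true)) ∪ ((allW n).image (List.cons false))

lemma mem_allW : ∀ (n : ℕ) (p : List Bool), p ∈ allW n ↔ p.length = n := by
  intro n
  induction n with
  | zero => intro p; simp [allW, List.length_eq_zero_iff]
  | succ n ih =>
    intro p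
    cases p with
    | nil => simp [allW]
    | cons b t => cases b <;> simp [allW, ih]

/-- Nonnegative (shifted by `m`) words of length `n` with `k` up-steps. -/
def W (n k m : ℕ) : Finset (List Bool) :=
  (allW n).filter (fun p => p.count true = k ∧ bal m p = true)

lemma W_succ (n k m : ℕ) :
    (W (n+1) k m).card = (if k = 0 then 0 else (W n (k-1) (m+1)).card)
      + (if m = 0 then 0 else (W n k (m-1)).card) := by
  classical
  have hdisj : Disjoint (((allW n).image (List.cons true)).filter
      (fun p => p.count true = k ∧ bal m p = true))
      (((allW n).image (List.cons false)).filter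
      (fun p => p.count true = k ∧ bal m p = true)) := by
    rw [Finset.disjoint_left]
    intro p hp hp'
    simp only [Finset.mem_filter, Finset.mem_image] at hp hp'
    obtain ⟨⟨a, _, ha⟩, _⟩ := hp
    obtain ⟨b, _, hb⟩ := hp'.1
    rw [← ha] at hb
    simp at hb
  have hW : W (n+1) k m = (((allW n).image (List.cons true)).filter
      (fun p => p.count true = k ∧ bal m p = true))
      ∪ (((allW n).image (List.cons false)).filter
      (fun p => p.count true = k ∧ bal m p = true)) := by
    rw [W, allW, Finset.filter_union]
  rw [hW, Finset.card_union_of_disjoint hdisj]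
  congr 1
  · -- true branch
    cases k with
    | zero =>
      rw [if_pos rfl, Finset.card_eq_zero, Finset.filter_eq_empty_iff]
      intro p hp
      simp only [Finset.mem_image] at hp
      obtain ⟨a, _, ha⟩ := hp
      rw [← ha]
      simp [List.count_cons]
    | succ k =>
      rw [if_neg (Nat.succ_ne_zero k), Nat.succ_sub_one]
      rw [← Finset.card_image_of_injective (W n k (m+1)) (List.cons_injective : Function.Injective (List.cons true))]
      congr 1
      ext p
      simp only [Finset.mem_filter, Finset.mem_image, W]
      constructor
      · rintro ⟨⟨a, ha, rfl⟩, hc, hb⟩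
        refine ⟨a, ⟨ha, ?_, ?_⟩, rfl⟩
        · simp [List.count_cons] at hc; omega
        · rwa [show bal m (true :: a) = bal (m+1) a by cases m <;> rfl] at hb
      · rintro ⟨a, ⟨ha, hc, hb⟩, rfl⟩
        refine ⟨⟨a, ha, rfl⟩, ?_, ?_⟩
        · simp [List.count_cons]; omega
        · rwa [show bal m (true :: a) = bal (m+1) a by cases m <;> rfl]
  · -- false branch
    cases m with
    | zero =>
      rw [if_pos rfl, Finset.card_eq_zero, Finset.filter_eq_empty_iff]
      intro p hp
      simp only [Finset.mem_image] at hp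
      obtain ⟨a, _, ha⟩ := hp
      rw [← ha]
      rintro ⟨-, hb⟩
      rw [show bal 0 (false :: a) = false from rfl] at hb
      simp at hb
    | succ m =>
      rw [if_neg (Nat.succ_ne_zero m), Nat.succ_sub_one]
      rw [← Finset.card_image_of_injective (W n k m) (List.cons_injective : Function.Injective (List.cons false))]
      congr 1
      ext p
      simp only [Finset.mem_filter, Finset.mem_image, W]
      constructor
      · rintro ⟨⟨a, ha, rfl⟩, hc, hb⟩
        refine ⟨a, ⟨ha, ?_, ?_⟩, rfl⟩
        · simp [List.count_cons] at hc; omega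
        · exact hb
      · rintro ⟨a, ⟨ha, hc, hb⟩, rfl⟩
        refine ⟨⟨a, ha, rfl⟩, ?_, ?_⟩
        · simp [List.count_cons]; omega
        · exact hb

lemma card_W : ∀ (n k m : ℕ), n ≤ 2*k + m →
    (W n k m).card + n.choose (k+m+1) = n.choose k := by
  intro n
  induction n with
  | zero =>
    intro k m _
    have hW : W 0 k m = if k = 0 then {([] : List Bool)} else ∅ := by
      rcases Nat.eq_zero_or_pos k with hk | hk
      · subst hk
        rw [if_pos rfl, W, allW]
        ext p
        simp only [Finset.mem_filter, Finset.mem_singleton]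
        constructor
        · exact fun h => h.1
        · rintro rfl
          exact ⟨rfl, by simp [bal]⟩
      · rw [if_neg (by omega), W, allW, Finset.filter_eq_empty_iff]
        intro p hp
        simp only [Finset.mem_singleton] at hp
        subst hp
        simp
        omega
    rcases Nat.eq_zero_or_pos k with hk | hk
    · subst hk
      simp only [hW, if_pos rfl, Finset.card_singleton]
      simp
    · rw [hW, if_neg (by omega)]
      simp [Nat.choose_eq_zero_of_lt hk]
  | succ n ih =>
    intro k m h
    rw [W_succ]
    rcases Nat.eq_zero_or_pos k with hk | hk
    · subst hk
      rcases Nat.eq_zero_or_pos m with hm | hm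
      · omega
      · obtain ⟨m', rfl⟩ : ∃ m', m = m' + 1 := ⟨m - 1, by omega⟩
        rw [if_pos rfl, if_neg (Nat.succ_ne_zero m'), Nat.succ_sub_one]
        have h1 := ih 0 m' (by omega)
        have h2 : n.choose (0 + m' + 1) = 0 := Nat.choose_eq_zero_of_lt (by omega)
        have h3 : (n+1).choose (0 + (m'+1) + 1) = 0 := Nat.choose_eq_zero_of_lt (by omega)
        have h4 : n.choose 0 = 1 := Nat.choose_zero_right n
        have h5 : (n+1).choose 0 = 1 := Nat.choose_zero_right (n+1)
        omega
    · obtain ⟨k', rfl⟩ : ∃ k', k = k' + 1 := ⟨k - 1, by omega⟩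
      rcases Nat.eq_zero_or_pos m with hm | hm
      · subst hm
        rw [if_neg (Nat.succ_ne_zero k'), if_pos rfl, Nat.succ_sub_one]
        have h1 := ih k' (0+1) (by omega)
        rw [show k' + (0+1) + 1 = k' + 2 from rfl] at h1
        have a1 : (n+1).choose (k'+1+0+1) = (n+1).choose (k'+2) := by
          rw [show k'+1+0+1 = k'+2 by ring]
        have p1 : (n+1).choose (k'+2) = n.choose (k'+1) + n.choose (k'+2) :=
          Nat.choose_succ_succ' n (k'+1)
        have p2 : (n+1).choose (k'+1) = n.choose k' + n.choose (k'+1) :=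
          Nat.choose_succ_succ' n k'
        omega
      · obtain ⟨m', rfl⟩ : ∃ m', m = m' + 1 := ⟨m - 1, by omega⟩
        rw [if_neg (Nat.succ_ne_zero k'), if_neg (Nat.succ_ne_zero m'),
          Nat.succ_sub_one, Nat.succ_sub_one]
        have h1 := ih k' (m'+1+1) (by omega)
        have h2 := ih (k'+1) m' (by omega)
        rw [show k' + (m'+1+1) + 1 = k'+m'+3 by ring] at h1
        rw [show k'+1 + m' + 1 = k'+m'+2 by ring] at h2
        have a1 : (n+1).choose (k'+1+(m'+1)+1) = (n+1).choose (k'+m'+3) := by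
          rw [show k'+1+(m'+1)+1 = k'+m'+3 by ring]
        have p1 : (n+1).choose (k'+m'+3) = n.choose (k'+m'+2) + n.choose (k'+m'+3) :=
          Nat.choose_succ_succ' n (k'+m'+2)
        have p2 : (n+1).choose (k'+1) = n.choose k' + n.choose (k'+1) :=
          Nat.choose_succ_succ' n k'
        omega

/-- Nonnegative words of length `n`. -/
def T (n : ℕ) : Finset (List Bool) :=
  (allW n).filter (fun p => bal 0 p = true)

lemma card_T (n : ℕ) : (T n).card = n.choose ((n+1)/2) := by
  classical
  set j0 := (n+1)/2 with hj0
  have hfib : (T n).card = ∑ k ∈ Finset.Ico j0 (n+1),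
      ((T n).filter (fun p => p.count true = k)).card := by
    apply Finset.card_eq_sum_card_fiberwise (f := fun p : List Bool => p.count true)
    intro p hp
    simp only [Finset.mem_coe, T, Finset.mem_filter, mem_allW] at hp
    obtain ⟨hlen, hbal⟩ := hp
    have h1 : p.count true ≤ n := hlen ▸ (List.count_le_length : p.count true ≤ p.length)
    have h2 : p.count false ≤ p.count true := by
      have := (bal_iff p 0).mp hbal n
      rw [show p.take n = p from by rw [← hlen, List.take_length]] at this
      simpa using this
    have h3 := count_add_count p
    rw [hlen] at h3
    simp only [Finset.mem_coe, Finset.mem_Ico]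
    omega
  have hWfib : ∀ k, (T n).filter (fun p => p.count true = k) = W n k 0 := by
    intro k
    rw [T, W, Finset.filter_filter]
    apply Finset.filter_congr
    intro p _
    tauto
  simp only [hWfib] at hfib
  rw [hfib]
  have tele : ∀ t : ℕ, (∑ k ∈ Finset.Ico j0 (j0 + t), (W n k 0).card)
      + n.choose (j0 + t) = n.choose j0 := by
    intro t
    induction t with
    | zero => simp
    | succ t ih =>
      rw [show j0 + (t+1) = (j0 + t) + 1 by ring,
        Finset.sum_Ico_succ_top (by omega)]
      have hc := card_W n (j0 + t) 0 (by omega)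
      rw [Nat.add_zero] at hc
      omega
  have := tele ((n+1) - j0)
  rw [show j0 + ((n+1) - j0) = n + 1 by omega, Nat.choose_succ_self] at this
  omega

/-- Completing a first half into a symmetric path. -/
def comp (q : List Bool) : List Bool := q ++ q.reverse.map (fun b => !b)

lemma comp_spec (n : ℕ) (q : List Bool) (hlen : q.length = n) (hbal : bal 0 q = true) :
    IsDyckPath n (comp q) ∧ IsSymmetric (comp q) := by
  have hb : ∀ i, (q.take i).count false ≤ (q.take i).count true := by
    intro i
    have := (bal_iff q 0).mp hbal i
    simpa using this
  have hlc : (comp q).length = 2 * n := by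
    simp [comp, hlen]; omega
  have hct : (comp q).count true = n := by
    rw [comp, List.count_append, count_true_map_not, List.count_reverse]
    have := count_add_count q
    omega
  refine ⟨⟨hlc, hct, ?_⟩, ?_⟩
  · -- prefix condition
    have key : ∀ i ≤ 2 * n, ((comp q).take i).count false ≤ ((comp q).take i).count true := by
      intro i hi
      rcases le_or_gt i n with h | h
      · rw [comp, List.take_append, show i - q.length = 0 by omega]
        simp only [List.take_zero, List.append_nil]
        exact hb i
      · obtain ⟨j, rfl⟩ : ∃ j, i = n + j := ⟨i - n, by omega⟩
        have hj : j ≤ n := by omega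
        rw [comp, List.take_append,
          List.take_of_length_le (by omega), show n + j - q.length = j by omega]
        have e : List.take j (q.reverse.map (fun b => !b))
            = ((q.drop (n-j)).reverse).map (fun b => !b) := by
          rw [← List.map_take, List.take_reverse, hlen]
        rw [e, List.count_append, List.count_append, count_false_map_not,
          count_true_map_not, List.count_reverse, List.count_reverse]
        have hst : q.count true = (q.take (n-j)).count true + (q.drop (n-j)).count true := by
          conv_lhs => rw [← List.take_append_drop (n-j) q]
          rw [List.count_append]
        have hsf : q.count false = (q.take (n-j)).count false + (q.drop (n-j)).count false := by
          conv_lhs => rw [← List.take_append_drop (n-j) q]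
          rw [List.count_append]
        have := hb (n-j)
        omega
    intro i
    rcases le_or_gt i (2*n) with h | h
    · exact key i h
    · rw [List.take_of_length_le (by omega)]
      have := key (2*n) le_rfl
      rwa [List.take_of_length_le (by omega)] at this
  · -- symmetric
    simp [IsSymmetric, comp, List.reverse_append, List.map_map,
      Function.comp_def, Bool.not_not]

lemma main_set (n : ℕ) :
    {p : List Bool | IsDyckPath n p ∧ IsSymmetric p} = ↑((T n).image comp) := by
  ext p
  simp only [Set.mem_setOf_eq, Finset.coe_image, Set.mem_image, Finset.mem_coe,
    T, Finset.mem_filter, mem_allW]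
  constructor
  · rintro ⟨⟨hlen, hct, hpre⟩, hsym⟩
    refine ⟨p.take n, ⟨?_, ?_⟩, ?_⟩
    · rw [List.length_take, hlen]; omega
    · rw [bal_iff]
      intro i
      rw [List.take_take]
      have := hpre (min i n)
      omega
    · -- p = comp (p.take n)
      have hdrop : p.drop n = ((p.take n).reverse).map (fun b => !b) := by
        conv_lhs => rw [← hsym]
        rw [← List.map_drop]
        congr 1
        rw [List.drop_reverse, hlen, show 2*n - n = n by omega]
      rw [comp, ← hdrop, List.take_append_drop]
  · rintro ⟨q, ⟨hq1, hq2⟩, rfl⟩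
    exact comp_spec n q hq1 hq2

end SDyckAux

theorem total_symmetric_dyck_count (n : ℕ) :
    Set.ncard {p : List Bool | IsDyckPath n p ∧ IsSymmetric p} =
      n.choose (n / 2) := by
  classical
  rw [SDyckAux.main_set n, Set.ncard_coe_finset]
  rw [Finset.card_image_of_injOn]
  · rw [SDyckAux.card_T]
    rw [show (n+1)/2 = n - n/2 by omega, Nat.choose_symm (Nat.div_le_self n 2)]
  · intro q1 h1 q2 h2 heq
    simp only [Finset.mem_coe, SDyckAux.T, Finset.mem_filter, SDyckAux.mem_allW] at h1 h2
    have := congrArg (List.take n) heq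
    rwa [SDyckAux.comp, SDyckAux.comp, ← h1.1, List.take_left, h1.1, ← h2.1,
      List.take_left] at this
end

section
/- For every integer n ≥ 0, the sum over k from 0 to n of binomial(⌊n/2⌋, ⌊k/2⌋) · binomial(⌊(n+1)/2⌋, ⌊(k+1)/2⌋) equals binomial(n+1, ⌊(n+1)/2⌋). -/
open Finset

lemma sum_range_two_mul' (f : ℕ → ℕ) (m : ℕ) :
    ∑ k ∈ Finset.range (2 * m), f k = ∑ j ∈ Finset.range m, (f (2 * j) + f (2 * j + 1)) := by
  induction m with
  | zero => simp
  | succ m ih =>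
      have : 2 * (m + 1) = (2 * m + 1) + 1 := by ring
      rw [this, Finset.sum_range_succ, Finset.sum_range_succ, ih, Finset.sum_range_succ, add_assoc]

lemma vandermonde' (a b c : ℕ) :
    (a + b).choose c = ∑ i ∈ Finset.range (c + 1), a.choose i * b.choose (c - i) := by
  rw [Nat.add_choose_eq, Finset.Nat.sum_antidiagonal_eq_sum_range_succ_mk]

theorem sum_hoggatt_minus_one (n : ℕ) :
    ∑ k ∈ Finset.range (n + 1),
        (n / 2).choose (k / 2) * ((n + 1) / 2).choose ((k + 1) / 2) =
      (n + 1).choose ((n + 1) / 2) := by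
  rcases Nat.even_or_odd n with ⟨m, hm⟩ | ⟨m, hm⟩
  · subst hm
    have h1 : m + m = 2 * m := by ring
    rw [h1, Finset.sum_range_succ, sum_range_two_mul']
    have hnd : 2 * m / 2 = m := by omega
    have hnd2 : (2 * m + 1) / 2 = m := by omega
    rw [hnd, hnd2]
    have key : ∀ j ∈ Finset.range m,
        (m.choose ((2 * j) / 2) * m.choose ((2 * j + 1) / 2) +
          m.choose ((2 * j + 1) / 2) * m.choose ((2 * j + 1 + 1) / 2))
        = m.choose j * (m + 1).choose (m - j) := by
      intro j hj
      simp only [Finset.mem_range] at hj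
      have e1 : (2 * j) / 2 = j := by omega
      have e2 : (2 * j + 1) / 2 = j := by omega
      have e3 : (2 * j + 1 + 1) / 2 = j + 1 := by omega
      rw [e1, e2, e3]
      have hs : (m + 1).choose (m - j) = (m + 1).choose (j + 1) := by
        have : m + 1 - (j + 1) = m - j := by omega
        rw [← this, Nat.choose_symm (by omega)]
      rw [hs, Nat.choose_succ_succ m j]
      ring
    rw [Finset.sum_congr rfl key]
    have hlast : m.choose m * m.choose m = m.choose m * (m + 1).choose (m - m) := by
      simp
    rw [hlast, ← Finset.sum_range_succ (fun j => m.choose j * (m + 1).choose (m - j))]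
    have := vandermonde' m (m + 1) m
    rw [← this]
    congr 1
    omega
  · subst hm
    have h1 : 2 * m + 1 + 1 = 2 * (m + 1) := by ring
    have hnd : (2 * m + 1) / 2 = m := by omega
    have hnd2 : (2 * m + 1 + 1) / 2 = m + 1 := by omega
    rw [hnd, hnd2, h1, sum_range_two_mul']
    have key : ∀ j ∈ Finset.range (m + 1),
        (m.choose ((2 * j) / 2) * (m + 1).choose ((2 * j + 1) / 2) +
          m.choose ((2 * j + 1) / 2) * (m + 1).choose ((2 * j + 1 + 1) / 2))
        = m.choose j * (m + 2).choose (m + 1 - j) := by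
      intro j hj
      simp only [Finset.mem_range] at hj
      have e1 : (2 * j) / 2 = j := by omega
      have e2 : (2 * j + 1) / 2 = j := by omega
      have e3 : (2 * j + 1 + 1) / 2 = j + 1 := by omega
      rw [e1, e2, e3]
      have hs : (m + 2).choose (m + 1 - j) = (m + 2).choose (j + 1) := by
        have : m + 2 - (j + 1) = m + 1 - j := by omega
        rw [← this, Nat.choose_symm (by omega)]
      rw [hs, Nat.choose_succ_succ (m+1) j]
      ring
    rw [Finset.sum_congr rfl key]
    have := vandermonde' m (m + 2) (m + 1)
    rw [Finset.sum_range_succ] at this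
    simp [Nat.choose_succ_self] at this
    rw [← this]
    congr 1
    omega
end

section
/- Define ⟨n⟩ = binomial(n+1, 2) and ⟨n⟩! = ∏_{j=1}^{n} ⟨j⟩. Then for all integers 0 ≤ k ≤ n, (k+1) · ⟨n⟩! = binomial(n,k) · binomial(n+1,k) · ⟨k⟩! · ⟨n−k⟩!; equivalently, the Hoggatt binomial ⟨n⟩!/(⟨k⟩!·⟨n−k⟩!) equals (1/(k+1))·binomial(n,k)·binomial(n+1,k), which is the Narayana number N(n+1,k). -/
/-- `⟨n⟩ = binomial(n+1, 2)`. -/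
def hog (n : ℕ) : ℕ := (n + 1).choose 2

/-- `⟨n⟩! = ∏_{j=1}^{n} ⟨j⟩`, with `⟨0⟩! = 1`. -/
def hogFact (n : ℕ) : ℕ := ∏ j ∈ Finset.Icc 1 n, hog j

lemma two_mul_hog (j : ℕ) : 2 * hog j = j * (j + 1) := by
  have h2 : 2 ∣ j * (j + 1) := (Nat.even_mul_succ_self j).two_dvd
  have : hog j = j * (j + 1) / 2 := by
    rw [hog, Nat.choose_two_right]
    simp [Nat.mul_comm]
  rw [this, Nat.mul_div_cancel' h2]

lemma hogFact_pos (n : ℕ) : 0 < hogFact n := by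
  apply Finset.prod_pos
  intro j hj
  simp only [Finset.mem_Icc] at hj
  exact Nat.choose_pos (by omega)

lemma two_pow_hogFact (n : ℕ) : 2 ^ n * hogFact n = n.factorial * (n + 1).factorial := by
  induction n with
  | zero => simp [hogFact]
  | succ m ih =>
      have hstep : hogFact (m + 1) = hogFact m * hog (m + 1) :=
        Finset.prod_Icc_succ_top (Nat.succ_le_succ (Nat.zero_le m)) hog
      have h2 : 2 * hog (m + 1) = (m + 1) * (m + 2) := two_mul_hog (m + 1)
      calc 2 ^ (m + 1) * hogFact (m + 1)
          = (2 ^ m * hogFact m) * (2 * hog (m + 1)) := by rw [hstep]; ring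
        _ = (m.factorial * (m + 1).factorial) * ((m + 1) * (m + 2)) := by rw [ih, h2]
        _ = (m + 1).factorial * (m + 2).factorial := by
            rw [Nat.factorial_succ (m + 1), Nat.factorial_succ m]; ring

theorem hoggatt_binomial_eq_narayana (n k : ℕ) (hk : k ≤ n) :
    (k + 1) * hogFact n = n.choose k * (n + 1).choose k * hogFact k * hogFact (n - k) ∧
      hogFact n / (hogFact k * hogFact (n - k)) = narayana (n + 1) k := by
  have h1 : n.choose k * k.factorial * (n - k).factorial = n.factorial :=
    Nat.choose_mul_factorial_mul_factorial hk
  have h2 : (n + 1).choose k * k.factorial * (n + 1 - k).factorial = (n + 1).factorial :=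
    Nat.choose_mul_factorial_mul_factorial (Nat.le_succ_of_le hk)
  have h3 : n + 1 - k = (n - k) + 1 := by omega
  have hpow : (2 : ℕ) ^ k * 2 ^ (n - k) = 2 ^ n := by
    rw [← pow_add]; congr 1; omega
  have part1 : (k + 1) * hogFact n
      = n.choose k * (n + 1).choose k * hogFact k * hogFact (n - k) := by
    have hcan : 2 ^ n * ((k + 1) * hogFact n)
        = 2 ^ n * (n.choose k * (n + 1).choose k * hogFact k * hogFact (n - k)) := by
      calc 2 ^ n * ((k + 1) * hogFact n)
          = (k + 1) * (2 ^ n * hogFact n) := by ring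
        _ = (k + 1) * (n.factorial * (n + 1).factorial) := by rw [two_pow_hogFact]
        _ = (k + 1) * ((n.choose k * k.factorial * (n - k).factorial)
              * ((n + 1).choose k * k.factorial * ((n - k) + 1).factorial)) := by
            rw [h1, ← h3, h2]
        _ = n.choose k * (n + 1).choose k
              * (k.factorial * (k + 1).factorial) * ((n - k).factorial * ((n - k) + 1).factorial) := by
            rw [Nat.factorial_succ k, Nat.factorial_succ (n - k)]; ring
        _ = n.choose k * (n + 1).choose k
              * (2 ^ k * hogFact k) * (2 ^ (n - k) * hogFact (n - k)) := by
            rw [two_pow_hogFact k, two_pow_hogFact (n - k)]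
        _ = (2 ^ k * 2 ^ (n - k)) * (n.choose k * (n + 1).choose k * hogFact k * hogFact (n - k)) := by
            ring
        _ = 2 ^ n * (n.choose k * (n + 1).choose k * hogFact k * hogFact (n - k)) := by
            rw [hpow]
    exact Nat.eq_of_mul_eq_mul_left (pow_pos (by norm_num) n) hcan
  refine ⟨part1, ?_⟩
  -- divisibility : (k+1) ∣ C(n,k) * C(n+1,k)
  set p := n.choose k * (n + 1).choose k with hp
  have hd1 : (k + 1) ∣ p * (n + 1) := by
    have := Nat.add_one_mul_choose_eq n k
    -- (n+1) * C(n,k) = C(n+1,k+1) * (k+1)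
    refine ⟨(n + 1).choose k * (n + 1).choose (k + 1), ?_⟩
    calc p * (n + 1) = (n + 1).choose k * ((n + 1) * n.choose k) := by rw [hp]; ring
      _ = (n + 1).choose k * ((n + 1).choose (k + 1) * (k + 1)) := by
          rw [← this]
      _ = (k + 1) * ((n + 1).choose k * (n + 1).choose (k + 1)) := by ring
  have hd2 : (k + 1) ∣ p * (n + 1 - k) := by
    have hc := Nat.choose_succ_right_eq (n + 1) k
    -- (n+1).choose (k+1) * (k+1) = (n+1).choose k * (n+1-k)
    refine ⟨n.choose k * (n + 1).choose (k + 1), ?_⟩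
    calc p * (n + 1 - k) = n.choose k * ((n + 1).choose k * (n + 1 - k)) := by rw [hp]; ring
      _ = n.choose k * ((n + 1).choose (k + 1) * (k + 1)) := by rw [← hc]
      _ = (k + 1) * (n.choose k * (n + 1).choose (k + 1)) := by ring
  have hdk : (k + 1) ∣ p * k := by
    have hsub : p * (n + 1) - p * (n + 1 - k) = p * k := by
      have h4 : (n + 1) - (n + 1 - k) = k := by omega
      rw [← Nat.mul_sub, h4]
    exact hsub ▸ Nat.dvd_sub hd1 hd2
  have hdvd : (k + 1) ∣ p :=
    (Nat.add_comm 1 k ▸ (Nat.coprime_add_self_left (m := 1) (n := k)).mpr (Nat.coprime_one_left k) : Nat.Coprime (k + 1) k).dvd_of_dvd_mul_right hdk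
  obtain ⟨N, hN⟩ := hdvd
  have hnar : narayana (n + 1) k = N := by
    rw [narayana]
    simp only [Nat.add_sub_cancel]
    rw [show (n + 1).choose k * n.choose k = n.choose k * (n + 1).choose k from mul_comm _ _,
      ← hp, hN, Nat.mul_div_cancel_left _ (Nat.succ_pos k)]
  have hD : 0 < hogFact k * hogFact (n - k) :=
    Nat.mul_pos (hogFact_pos k) (hogFact_pos (n - k))
  have hEq : hogFact n = N * (hogFact k * hogFact (n - k)) := by
    have : (k + 1) * hogFact n = (k + 1) * (N * (hogFact k * hogFact (n - k))) := by
      rw [part1, hN]; ring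
    exact Nat.eq_of_mul_eq_mul_left (Nat.succ_pos k) this
  rw [hEq, Nat.mul_div_cancel _ hD, hnar]
end

section
/- Define f(n,k) = binomial(⌊n/2⌋, ⌊k/2⌋) · binomial(⌊(n+1)/2⌋, ⌊(k+1)/2⌋). Then for all integers n ≥ 1 and k ≥ 1, f(n, 2k) = f(n-1, 2k) + f(n-1, 2k-1). -/
/-- `f n k` is the Hoggatt q-binomial `⟨n,k⟩` evaluated at `q = -1`:
`binomial(⌊n/2⌋, ⌊k/2⌋) * binomial(⌊(n+1)/2⌋, ⌊(k+1)/2⌋)`. -/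
def f (n k : ℕ) : ℕ := (n / 2).choose (k / 2) * ((n + 1) / 2).choose ((k + 1) / 2)

theorem f_even_recurrence (n k : ℕ) (hn : 1 ≤ n) (hk : 1 ≤ k) :
    f n (2 * k) = f (n - 1) (2 * k) + f (n - 1) (2 * k - 1) := by
  obtain ⟨j, rfl⟩ : ∃ j, k = j + 1 := ⟨k - 1, by omega⟩
  unfold f
  rcases Nat.even_or_odd n with ⟨m, rfl⟩ | ⟨m, rfl⟩
  · obtain ⟨p, rfl⟩ : ∃ p, m = p + 1 := ⟨m - 1, by omega⟩
    have h1 : (p + 1 + (p + 1)) / 2 = p + 1 := by omega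
    have h2 : (p + 1 + (p + 1) + 1) / 2 = p + 1 := by omega
    have h3 : (p + 1 + (p + 1) - 1) / 2 = p := by omega
    have h3' : (p + 1 + (p + 1) - 1 + 1) / 2 = p + 1 := by omega
    have h4 : (2 * (j + 1)) / 2 = j + 1 := by omega
    have h5 : (2 * (j + 1) + 1) / 2 = j + 1 := by omega
    have h6 : (2 * (j + 1) - 1) / 2 = j := by omega
    have h7 : (2 * (j + 1) - 1 + 1) / 2 = j + 1 := by omega
    rw [h1, h2, h3, h3', h4, h5, h6, h7, Nat.choose_succ_succ p j, Nat.add_mul]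
    ring
  · have h1 : (2 * m + 1) / 2 = m := by omega
    have h2 : (2 * m + 1 + 1) / 2 = m + 1 := by omega
    have h3 : (2 * m + 1 - 1) / 2 = m := by omega
    have h3' : (2 * m + 1 - 1 + 1) / 2 = m := by omega
    have h4 : (2 * (j + 1)) / 2 = j + 1 := by omega
    have h5 : (2 * (j + 1) + 1) / 2 = j + 1 := by omega
    have h6 : (2 * (j + 1) - 1) / 2 = j := by omega
    have h7 : (2 * (j + 1) - 1 + 1) / 2 = j + 1 := by omega
    rw [h1, h2, h3, h3', h4, h5, h6, h7, Nat.choose_succ_succ m j, Nat.mul_add]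
    ring
end

section
/- Define f(n,k) = binomial(⌊n/2⌋, ⌊k/2⌋) · binomial(⌊(n+1)/2⌋, ⌊(k+1)/2⌋), and let N(n,k) = (1/(k+1))·binomial(n,k)·binomial(n-1,k). Then for all integers n ≥ 1 and k ≥ 0: f(2n-1, 2k+1) = f(2n-2, 2k+1) + f(2n-2, 2k), and f(2n, 2k+1) = f(2n-1, 2k+1) + f(2n-1, 2k) − N(n,k). -/
theorem f_odd_recurrences (n k : ℕ) (hn : 1 ≤ n) :
    f (2 * n - 1) (2 * k + 1) = f (2 * n - 2) (2 * k + 1) + f (2 * n - 2) (2 * k) ∧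
      (f (2 * n) (2 * k + 1) : ℤ) =
        f (2 * n - 1) (2 * k + 1) + f (2 * n - 1) (2 * k) - narayana n k := by
  obtain ⟨m, rfl⟩ : ∃ m, n = m + 1 := ⟨n - 1, by omega⟩
  have e1 : 2 * (m + 1) - 1 = 2 * m + 1 := by omega
  have e2 : 2 * (m + 1) - 2 = 2 * m := by omega
  have e3 : 2 * (m + 1) = 2 * m + 2 := by omega
  rw [e1, e2, e3]
  have fA : f (2 * m + 1) (2 * k + 1) = m.choose k * (m + 1).choose (k + 1) := by
    unfold f
    rw [show (2 * m + 1) / 2 = m by omega, show (2 * m + 1 + 1) / 2 = m + 1 by omega,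
      show (2 * k + 1) / 2 = k by omega, show (2 * k + 1 + 1) / 2 = k + 1 by omega]
  have fB : f (2 * m) (2 * k + 1) = m.choose k * m.choose (k + 1) := by
    unfold f
    rw [show (2 * m) / 2 = m by omega, show (2 * m + 1) / 2 = m by omega,
      show (2 * k + 1) / 2 = k by omega, show (2 * k + 1 + 1) / 2 = k + 1 by omega]
  have fC : f (2 * m) (2 * k) = m.choose k * m.choose k := by
    unfold f
    rw [show (2 * m) / 2 = m by omega, show (2 * m + 1) / 2 = m by omega,
      show (2 * k) / 2 = k by omega, show (2 * k + 1) / 2 = k by omega]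
  have fD : f (2 * m + 2) (2 * k + 1) = (m + 1).choose k * (m + 1).choose (k + 1) := by
    unfold f
    rw [show (2 * m + 2) / 2 = m + 1 by omega, show (2 * m + 2 + 1) / 2 = m + 1 by omega,
      show (2 * k + 1) / 2 = k by omega, show (2 * k + 1 + 1) / 2 = k + 1 by omega]
  have fE : f (2 * m + 1) (2 * k) = m.choose k * (m + 1).choose k := by
    unfold f
    rw [show (2 * m + 1) / 2 = m by omega, show (2 * m + 1 + 1) / 2 = m + 1 by omega,
      show (2 * k) / 2 = k by omega, show (2 * k + 1) / 2 = k by omega]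
  constructor
  · rw [fA, fB, fC, Nat.choose_succ_succ]
    ring
  rw [fA, fD, fE]
  have hnar : narayana (m + 1) k = (m + 1).choose k * m.choose k / (k + 1) := by
    simp [narayana]
  rcases Nat.eq_zero_or_pos k with rfl | hk
  · simp [hnar, Nat.choose_one_right]
  obtain ⟨j, rfl⟩ : ∃ j, k = j + 1 := ⟨k - 1, by omega⟩
  rcases lt_or_ge m (j + 1) with hm | hm
  · have h1 : m.choose (j + 1) = 0 := Nat.choose_eq_zero_of_lt hm
    have h2 : (m + 1).choose (j + 2) = 0 := Nat.choose_eq_zero_of_lt (by omega)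
    simp [hnar, h1, h2]
  -- main case : j + 1 ≤ m
  set A : ℤ := (m.choose j : ℤ) with hA
  set B : ℤ := (m.choose (j + 1) : ℤ) with hB'
  set Q : ℤ := ((m + 1).choose (j + 2) : ℤ) with hQ'
  set P : ℤ := ((m + 1).choose (j + 1) : ℤ) with hP'
  have hc : ((m - j : ℕ) : ℤ) = (m : ℤ) - j := by
    have : j ≤ m := by omega
    push_cast [this]; ring
  have hQ : Q * (j + 2) = P * ((m : ℤ) - j) := by
    have := Nat.choose_succ_right_eq (m + 1) (j + 1)
    have h' : (m + 1) - (j + 1) = m - j := by omega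
    rw [h'] at this
    rw [hQ', hP', ← hc]
    exact_mod_cast this
  have hBr : B * (j + 1) = A * ((m : ℤ) - j) := by
    have := Nat.choose_succ_right_eq m j
    rw [hB', hA, ← hc]
    exact_mod_cast this
  have hP : P = A + B := by
    rw [hP', hA, hB']
    exact_mod_cast Nat.choose_succ_succ m j
  have hdvdZ : ((j : ℤ) + 2) ∣ P * B := ⟨B * P - A * Q, by linear_combination A * hQ - P * hBr⟩
  have hdvd : (j + 2) ∣ (m + 1).choose (j + 1) * m.choose (j + 1) := by
    have := hdvdZ
    rw [hP', hB'] at this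
    exact_mod_cast this
  have hN : (narayana (m + 1) (j + 1) : ℤ) * ((j : ℤ) + 2) = P * B := by
    have h := Nat.div_mul_cancel hdvd
    rw [hnar]
    rw [hP', hB']
    exact_mod_cast h
  have h2 : ((j : ℤ) + 2) ≠ 0 := by positivity
  apply mul_left_cancel₀ h2
  push_cast
  linear_combination (P - B) * hQ + hN + ((m : ℤ) - j) * P * hP - P * hBr
end

section
/- For all integers n ≥ 1 and k ≥ 0: the number of symmetric Dyck paths of semi-length n with exactly 2k valleys equals the number of nonnegative lattice paths of length n (sequences of n steps U = +1 or D = −1 starting at height 0 with all partial sums nonnegative) whose last step is U and which contain exactly k occurrences of a D step immediately followed by a U step; and the number of symmetric Dyck paths of semi-length n with exactly 2k+1 valleys equals the number of such nonnegative lattice paths of length n whose last step is D and which contain exactly k occurrences of a D step immediately followed by a U step. -/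
/-- A nonnegative lattice path of length `n`: a sequence of `n` steps, each
`U = +1` (encoded `true`) or `D = -1` (encoded `false`), starting at height `0`,
all of whose partial sums are nonnegative. -/
def IsNonnegPath (n : ℕ) (p : List Bool) : Prop :=
  p.length = n ∧ ∀ i, (p.take i).count false ≤ (p.take i).count true

/-- The number of occurrences of `DU`: positions where a `D` step is
immediately followed by a `U` step. -/
def duCount (p : List Bool) : ℕ :=
  (p.zip p.tail).count (false, true)

namespace SymDyckAux

def comp (l : List Bool) : List Bool := l.reverse.map (fun b => !b)

def f (q : List Bool) : List Bool := q ++ comp q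

lemma count_not_map (l : List Bool) (b : Bool) :
    (l.map (fun x => !x)).count b = l.count (!b) := by
  induction l with
  | nil => rfl
  | cons a l ih => cases a <;> cases b <;> simp_all [List.count_cons]

lemma count_comp (l : List Bool) (b : Bool) : (comp l).count b = l.count (!b) := by
  rw [comp, count_not_map, List.count_reverse]

lemma count_false_add_count_true (l : List Bool) :
    l.count false + l.count true = l.length := by
  induction l with
  | nil => rfl
  | cons a l ih => cases a <;> simp [List.count_cons] <;> omega

lemma duCount_cons_cons (x y : Bool) (l : List Bool) :
    duCount (x :: y :: l) = duCount (y :: l) + (if x = false ∧ y = true then 1 else 0) := by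
  cases x <;> cases y <;> simp [duCount, List.count_cons]

lemma duCount_append (A B : List Bool) (a b : Bool)
    (hA : A.getLast? = some a) (hB : B.head? = some b) :
    duCount (A ++ B) = duCount A + duCount B +
      (if a = false ∧ b = true then 1 else 0) := by
  induction A with
  | nil => simp at hA
  | cons x A ih =>
    cases A with
    | nil =>
      cases B with
      | nil => simp at hB
      | cons y B =>
        obtain rfl : x = a := by simpa using hA
        obtain rfl : y = b := by simpa using hB
        have h0 : ∀ c : Bool, duCount [c] = 0 := fun _ => rfl
        simp [List.singleton_append, duCount_cons_cons, h0]
    | cons y A =>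
      have hA' : (y :: A).getLast? = some a := by
        rwa [List.getLast?_cons_cons] at hA
      have := ih hA'
      simp only [List.cons_append] at this ⊢
      rw [duCount_cons_cons, duCount_cons_cons x y A, this]
      omega

lemma comp_head? (l : List Bool) (a : Bool) (h : l.getLast? = some a) :
    (comp l).head? = some (!a) := by
  rw [comp, List.head?_map, List.head?_reverse, h, Option.map_some]

lemma comp_getLast? (l : List Bool) (a : Bool) (h : l.head? = some a) :
    (comp l).getLast? = some (!a) := by
  rw [comp, List.getLast?_map, List.getLast?_reverse, h, Option.map_some]

lemma duCount_comp (l : List Bool) : duCount (comp l) = duCount l := by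
  induction l with
  | nil => rfl
  | cons x l ih =>
    cases l with
    | nil => rfl
    | cons y l =>
      have h1 : comp (x :: y :: l) = comp (y :: l) ++ [!x] := by
        simp [comp]
      have h2 : (comp (y :: l)).getLast? = some (!y) := comp_getLast? _ _ rfl
      rw [h1, duCount_append _ _ (!y) (!x) h2 (List.head?_cons), ih, duCount_cons_cons]
      have h0 : ∀ a : Bool, duCount [a] = 0 := fun _ => rfl
      cases x <;> cases y <;> simp [h0]


lemma isSymmetric_f (q : List Bool) : IsSymmetric (f q) := by
  simp only [IsSymmetric, f, comp, List.reverse_append, List.map_append,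
    ← List.map_reverse, List.reverse_reverse, List.map_map]
  simp [Function.comp_def, Bool.not_not]

lemma drop_symm (p : List Bool) (h : IsSymmetric p) (i : ℕ) :
    p.drop i = ((p.take (p.length - i)).reverse).map (fun b => !b) := by
  conv_lhs => rw [← h]
  rw [← List.map_drop, List.drop_reverse]

lemma length_comp (l : List Bool) : (comp l).length = l.length := by
  simp [comp]

lemma f_dyck (n : ℕ) (q : List Bool) (hq : IsNonnegPath n q) :
    IsDyckPath n (f q) := by
  obtain ⟨hlen, hpre⟩ := hq
  have hflen : (f q).length = 2 * n := by
    simp [f, length_comp, hlen]; omega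
  have hcf : (f q).count false = n := by
    rw [f, List.count_append, count_comp]
    have := count_false_add_count_true q
    simp only [Bool.not_false]
    omega
  have hct : (f q).count true = n := by
    rw [f, List.count_append, count_comp]
    have := count_false_add_count_true q
    simp only [Bool.not_true]
    omega
  refine ⟨hflen, hct, fun i => ?_⟩
  have hsym := isSymmetric_f q
  rcases le_or_gt i n with hi | hi
  · have : (f q).take i = q.take i := by
      rw [f, List.take_append,
        show i - q.length = 0 by omega, List.take_zero, List.append_nil]
    rw [this]; exact hpre i
  rcases le_or_gt (2 * n) i with h2 | h2
  · rw [List.take_of_length_le (by omega)]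
    omega
  · -- n < i < 2n
    set j := 2 * n - i with hj
    have hdrop : (f q).drop i = (((f q).take j).reverse).map (fun b => !b) := by
      rw [drop_symm _ hsym, hflen]
    have htj : (f q).take j = q.take j := by
      rw [f, List.take_append,
        show j - q.length = 0 by omega, List.take_zero, List.append_nil]
    have hsplitf : ((f q).take i).count false + ((f q).drop i).count false
        = (f q).count false := by
      rw [← List.count_append, List.take_append_drop]
    have hsplitt : ((f q).take i).count true + ((f q).drop i).count true
        = (f q).count true := by
      rw [← List.count_append, List.take_append_drop]
    have hdf : ((f q).drop i).count false = (q.take j).count true := by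
      rw [hdrop, count_not_map, List.count_reverse, htj]
      rfl
    have hdt : ((f q).drop i).count true = (q.take j).count false := by
      rw [hdrop, count_not_map, List.count_reverse, htj]
      rfl
    have := hpre j
    omega

lemma f_valleys (q : List Bool) (hne : q ≠ []) :
    valleys (f q) = 2 * duCount q +
      (if q.getLast? = some false then 1 else 0) := by
  obtain ⟨a, ha⟩ : ∃ a, q.getLast? = some a := by
    cases h : q.getLast? with
    | none => exact absurd (List.getLast?_eq_none_iff.mp h) hne
    | some a => exact ⟨a, rfl⟩
  have hhead : (comp q).head? = some (!a) := comp_head? q a ha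
  have : valleys (f q) = duCount (f q) := rfl
  rw [this, f, duCount_append q (comp q) a (!a) ha hhead, duCount_comp, ha]
  cases a <;> simp <;> omega

lemma take_symm (n : ℕ) (p : List Bool) (hp : IsDyckPath n p) (hs : IsSymmetric p) :
    IsNonnegPath n (p.take n) ∧ f (p.take n) = p := by
  obtain ⟨hlen, hct, hpre⟩ := hp
  have hql : (p.take n).length = n := by
    rw [List.length_take]; omega
  constructor
  · refine ⟨hql, fun i => ?_⟩
    rw [List.take_take]
    rcases le_or_gt i n with hi | hi
    · rw [min_eq_left hi]; exact hpre i
    · rw [min_eq_right (le_of_lt hi)]; exact hpre n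
  · have hdrop : p.drop n = comp (p.take n) := by
      rw [drop_symm p hs n, hlen, show 2 * n - n = n by omega, comp]
    rw [f, ← hdrop, List.take_append_drop]

lemma main_image (n k : ℕ) (hn : 1 ≤ n) (b : Bool) :
    {p : List Bool | IsDyckPath n p ∧ IsSymmetric p ∧
        valleys p = 2 * k + (if b then 0 else 1)} =
      f '' {q : List Bool | IsNonnegPath n q ∧ q.getLast? = some b ∧ duCount q = k} := by
  ext p
  simp only [Set.mem_setOf_eq, Set.mem_image]
  constructor
  · rintro ⟨hd, hs, hv⟩
    refine ⟨p.take n, ?_, (take_symm n p hd hs).2⟩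
    obtain ⟨hq, hfq⟩ := take_symm n p hd hs
    have hne : p.take n ≠ [] := by
      intro h
      have := hq.1
      rw [h] at this
      simp at this
      omega
    have hv' := f_valleys (p.take n) hne
    rw [hfq] at hv'
    obtain ⟨a, ha⟩ : ∃ a, (p.take n).getLast? = some a := by
      cases h : (p.take n).getLast? with
      | none => exact absurd (List.getLast?_eq_none_iff.mp h) hne
      | some a => exact ⟨a, rfl⟩
    have hb : a = b ∧ duCount (p.take n) = k := by
      rw [ha] at hv'
      cases a <;> cases b <;> simp_all <;> omega
    exact ⟨hq, by rw [ha, hb.1], hb.2⟩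
  · rintro ⟨q, ⟨hq, hlast, hdu⟩, rfl⟩
    have hne : q ≠ [] := by
      intro h; rw [h] at hlast; simp at hlast
    refine ⟨f_dyck n q hq, isSymmetric_f q, ?_⟩
    rw [f_valleys q hne, hlast, hdu]
    cases b <;> simp

lemma f_injOn (n : ℕ) (s : Set (List Bool)) (hs : ∀ q ∈ s, q.length = n) :
    Set.InjOn f s := by
  intro q1 h1 q2 h2 he
  have e1 : (f q1).take n = q1 := by rw [f]; exact List.take_left' (hs q1 h1)
  have e2 : (f q2).take n = q2 := by rw [f]; exact List.take_left' (hs q2 h2)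
  rw [← e1, ← e2, he]
end SymDyckAux

theorem symmetric_dyck_eq_half_paths (n k : ℕ) (hn : 1 ≤ n) :
    u n (2 * k) =
        Set.ncard {p : List Bool |
          IsNonnegPath n p ∧ p.getLast? = some true ∧ duCount p = k} ∧
      u n (2 * k + 1) =
        Set.ncard {p : List Bool |
          IsNonnegPath n p ∧ p.getLast? = some false ∧ duCount p = k} := by
  constructor
  · have h := SymDyckAux.main_image n k hn true
    simp only [if_true, add_zero] at h
    rw [u, h, Set.ncard_image_of_injOn
      (SymDyckAux.f_injOn n _ (fun q hq => hq.1.1))]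
  · have h := SymDyckAux.main_image n k hn false
    simp only [Bool.false_eq_true, if_false] at h
    rw [u, h, Set.ncard_image_of_injOn
      (SymDyckAux.f_injOn n _ (fun q hq => hq.1.1))]
end

section
/- For every integer n ≥ 1, the sum over k from 0 to n-1 of binomial(⌊(n-1)/2⌋, ⌊k/2⌋) · binomial(⌊n/2⌋, ⌊(k+1)/2⌋) equals binomial(n, ⌊n/2⌋). -/
open Finset

lemma sum_range_two_mul_aux (m : ℕ) (f : ℕ → ℕ) :
    ∑ k ∈ Finset.range (2 * m), f k = ∑ j ∈ Finset.range m, (f (2 * j) + f (2 * j + 1)) := by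
  induction m with
  | zero => simp
  | succ m ih =>
      have h : 2 * (m + 1) = (2 * m + 1) + 1 := by ring
      rw [h, Finset.sum_range_succ, Finset.sum_range_succ, ih, Finset.sum_range_succ]
      ring

lemma vandermonde_aux (a b : ℕ) :
    ∑ j ∈ Finset.range (b + 1), a.choose j * (b + 1).choose (j + 1) =
      (a + b + 1).choose b := by
  have h := Nat.add_choose_eq a (b + 1) b
  rw [Finset.Nat.sum_antidiagonal_eq_sum_range_succ_mk] at h
  have h2 : a + (b + 1) = a + b + 1 := by ring
  rw [h2] at h
  rw [h]
  apply Finset.sum_congr rfl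
  intro j hj
  simp only [Finset.mem_range] at hj
  congr 1
  have hs : (b + 1).choose ((b + 1) - (j + 1)) = (b + 1).choose (j + 1) :=
    Nat.choose_symm (by omega)
  have : b - j = (b + 1) - (j + 1) := by omega
  rw [this, hs]

theorem sum_q_narayana_minus_one (n : ℕ) (hn : 1 ≤ n) :
    ∑ k ∈ Finset.range n,
        ((n - 1) / 2).choose (k / 2) * (n / 2).choose ((k + 1) / 2) =
      n.choose (n / 2) := by
  set a := (n - 1) / 2 with ha
  set b := n / 2 with hb
  have hab : a + b + 1 = n := by omega
  -- extend the sum to range (2 * (b + 1)); extra terms vanish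
  have hext : ∑ k ∈ Finset.range n, a.choose (k / 2) * b.choose ((k + 1) / 2)
      = ∑ k ∈ Finset.range (2 * (b + 1)), a.choose (k / 2) * b.choose ((k + 1) / 2) := by
    apply Finset.sum_subset
    · apply Finset.range_subset_range.mpr; omega
    · intro k hk hk'
      simp only [Finset.mem_range] at hk hk'
      by_cases h1 : a < k / 2
      · rw [Nat.choose_eq_zero_of_lt h1, zero_mul]
      · have h2 : b < (k + 1) / 2 := by omega
        rw [Nat.choose_eq_zero_of_lt h2, mul_zero]
  rw [hext, sum_range_two_mul_aux]
  have hterm : ∀ j, a.choose ((2 * j) / 2) * b.choose ((2 * j + 1) / 2)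
      + a.choose ((2 * j + 1) / 2) * b.choose ((2 * j + 1 + 1) / 2)
      = a.choose j * (b + 1).choose (j + 1) := by
    intro j
    have e1 : (2 * j) / 2 = j := by omega
    have e2 : (2 * j + 1) / 2 = j := by omega
    have e3 : (2 * j + 1 + 1) / 2 = j + 1 := by omega
    rw [e1, e2, e3, Nat.choose_succ_succ]
    ring
  rw [Finset.sum_congr rfl (fun j _ => hterm j), vandermonde_aux, hab]
end
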